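/- arXiv:2402.03950 — 11 statements merged into one kernel-verified Lean document; each statement's English description precedes it below -/
import Mathlib

section
/- Let A be a complex unital Banach algebra and x ∈ A. If σ(yx) = {0} for all invertible y ∈ A, then x ∈ rad(A), i.e., σ(wx) = {0} for all w ∈ A. -/
theorem spectrum_zero_of_spectrum_zero_on_units {A : Type*} [NormedRing A]
    [NormedAlgebra ℂ A] [CompleteSpace A] (x : A)
    (h : ∀ y : A, IsUnit y → spectrum ℂ (y * x) = {0}) :
    x ∈ Ideal.jacobson (⊥ : Ideal A) ∧ ∀ w : A, spectrum ℂ (w * x) = {0} := by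
  -- A is nontrivial, since σ(x) = {0} means x is not a unit, impossible in a trivial ring
  have hnt : Nontrivial A := by
    rcases subsingleton_or_nontrivial A with hs | hn
    · exfalso
      have h0 : (0 : ℂ) ∈ spectrum ℂ ((1 : A) * x) := by
        rw [h 1 isUnit_one]; rfl
      exact (spectrum.zero_mem_iff ℂ).mp h0 (isUnit_of_subsingleton _)
    · exact hn
  -- Key lemma 1: 1 - y*x is a unit for every unit y
  have L1 : ∀ y : A, IsUnit y → IsUnit (1 - y * x) := by
    intro y hy
    have h1 : (1 : ℂ) ∉ spectrum ℂ (y * x) := by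
      rw [h y hy]
      simp
    have := spectrum.notMem_iff.mp h1
    simpa using this
  -- Key lemma 2: 1 - v*x is a unit for every v
  have L2 : ∀ v : A, IsUnit (1 - v * x) := by
    intro v
    set c : ℂ := ((‖v‖ * ‖(1 : A)‖ + 1 : ℝ) : ℂ) with hc
    have hcpos : (0 : ℝ) < ‖v‖ * ‖(1 : A)‖ + 1 := by positivity
    have hcs : c ∉ spectrum ℂ v := by
      intro hmem
      have := spectrum.norm_le_norm_mul_of_mem hmem
      rw [hc] at this
      simp only [Complex.norm_real, Real.norm_eq_abs, abs_of_pos hcpos] at this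
      linarith
    have hu : IsUnit ((algebraMap ℂ A) c) := by
      have hc0 : c ≠ 0 := by
        rw [hc]
        exact_mod_cast ne_of_gt hcpos
      exact (IsUnit.mk0 c hc0).map (algebraMap ℂ A)
    have hd : IsUnit (v - (algebraMap ℂ A) c) := by
      have := spectrum.notMem_iff.mp hcs
      rw [← neg_sub]
      exact this.neg
    -- p := 1 - c•1 * x is a unit
    obtain ⟨P, hP⟩ := L1 _ hu
    set d : A := v - (algebraMap ℂ A) c with hdd
    have key : (P : A) * (1 - ((↑P⁻¹ : A) * d) * x) = 1 - v * x := by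
      have : (P : A) * (↑P⁻¹ : A) = 1 := P.mul_inv
      calc (P : A) * (1 - ((↑P⁻¹ : A) * d) * x)
          = (P : A) - ((P : A) * (↑P⁻¹ : A)) * (d * x) := by noncomm_ring
        _ = (1 - (algebraMap ℂ A) c * x) - d * x := by rw [this, hP, one_mul]
        _ = 1 - v * x := by rw [hdd]; noncomm_ring
    rw [← key]
    exact P.isUnit.mul (L1 _ ((P⁻¹).isUnit.mul hd))
  -- x lies in every maximal (left) ideal
  have hjac : x ∈ Ideal.jacobson (⊥ : Ideal A) := by
    rw [Ideal.jacobson]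
    rw [Ideal.mem_sInf]
    rintro M ⟨-, hM⟩
    by_contra hx
    have hlt : M < M ⊔ Ideal.span {x} := by
      refine lt_of_le_of_ne le_sup_left fun heq => hx ?_
      have : x ∈ M ⊔ Ideal.span {x} :=
        Submodule.mem_sup_right (Submodule.mem_span_singleton_self x)
      rwa [← heq] at this
    have htop : M ⊔ Ideal.span {x} = ⊤ := hM.out.2 _ hlt
    have h1 : (1 : A) ∈ M ⊔ Ideal.span {x} := htop ▸ Submodule.mem_top
    obtain ⟨m, hm, z, hz, hmz⟩ := Submodule.mem_sup.mp h1
    obtain ⟨a, ha⟩ := Submodule.mem_span_singleton.mp hz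
    have hmeq : m = 1 - a * x := by
      rw [← smul_eq_mul, ha, ← hmz]; abel
    have : IsUnit m := hmeq ▸ L2 a
    exact hM.out.1 (M.eq_top_of_isUnit_mem hm this)
  refine ⟨hjac, fun w => ?_⟩
  ext μ
  simp only [Set.mem_singleton_iff]
  constructor
  · intro hμ
    by_contra hμ0
    apply spectrum.notMem_iff.mpr _ hμ
    have hv := L2 ((μ⁻¹ : ℂ) • w)
    have : (algebraMap ℂ A) μ - w * x = μ • (1 - ((μ⁻¹ : ℂ) • w) * x) := by
      rw [smul_sub, Algebra.algebraMap_eq_smul_one, smul_mul_assoc, smul_smul,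
        mul_inv_cancel₀ hμ0, one_smul]
    rw [this]
    have hμu : IsUnit ((algebraMap ℂ A) μ) := (IsUnit.mk0 μ hμ0).map (algebraMap ℂ A)
    have := hμu.mul hv
    rwa [← Algebra.smul_def] at this
  · rintro rfl
    rw [spectrum.zero_mem_iff]
    rintro hwx
    obtain ⟨z, hz⟩ := hwx.exists_left_inv
    have : (1 : A) - (z * w) * x = 0 := by
      rw [mul_assoc, hz, sub_self]
    have h0 : IsUnit (0 : A) := this ▸ L2 (z * w)
    exact one_ne_zero (isUnit_zero_iff.mp h0).symm
end

section
/- Let A be a semisimple complex unital Banach algebra and a, b ∈ A. If for all x ∈ A, x + a is invertible if and only if x + b is invertible, then a = b. -/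
theorem eq_of_invertibility_variation {A : Type*} [NormedRing A] [NormedAlgebra ℂ A]
    [CompleteSpace A] (hA : Ideal.jacobson (⊥ : Ideal A) = ⊥) (a b : A)
    (h : ∀ x : A, IsUnit (x + a) ↔ IsUnit (x + b)) : a = b := by
  set c := a - b with hc
  have key : ∀ x : A, IsUnit (x + c) ↔ IsUnit x := by
    intro x
    have h1 : x - b + a = x + c := by rw [hc]; abel
    have h2 : x - b + b = x := by abel
    have := h (x - b)
    rwa [h1, h2] at this
  have key2 : ∀ (n : ℕ) (x : A), IsUnit (x + n • c) ↔ IsUnit x := by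
    intro n
    induction n with
    | zero => simp
    | succ n ih =>
      intro x
      have : x + (n + 1) • c = (x + n • c) + c := by rw [succ_nsmul]; abel
      rw [this, key, ih]
  have hu : ∀ u : Aˣ, IsUnit (1 - (u : A) * c) := by
    intro u
    have h1 : IsUnit ((↑u⁻¹ : A) - c) := by
      have := (key ((↑u⁻¹ : A) - c)).1
      simp only [sub_add_cancel] at this
      exact this (Units.isUnit _)
    have h2 : (u : A) * ((↑u⁻¹ : A) - c) = 1 - (u : A) * c := by
      rw [mul_sub, Units.mul_inv]
    rw [← h2]
    exact u.isUnit.mul h1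
  have main : ∀ y : A, IsUnit (1 - y * c) := by
    intro y
    set n : ℕ := ⌊‖y‖ * ‖(1:A)‖⌋₊ + 1 with hn
    have hny : ‖y‖ * ‖(1:A)‖ < (n : ℝ) := by
      have := Nat.lt_floor_add_one (‖y‖ * ‖(1:A)‖)
      exact_mod_cast this
    have hspec : ((n : ℂ)) ∉ spectrum ℂ y := by
      intro hmem
      have := spectrum.norm_le_norm_mul_of_mem hmem
      rw [Complex.norm_natCast] at this
      linarith
    have hun : IsUnit ((n : A) - y) := by
      rw [spectrum.notMem_iff] at hspec
      rwa [map_natCast] at hspec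
    have hun' : IsUnit (y - (n : A)) := by
      have := hun.neg
      rwa [neg_sub] at this
    obtain ⟨u, hu'⟩ := hun'
    have h1 : IsUnit (1 - (y - (n : A)) * c) := hu' ▸ hu u
    have h2 : (1 : A) - (y - (n : A)) * c = (1 - y * c) + n • c := by
      rw [sub_mul, nsmul_eq_mul]; noncomm_ring
    rw [h2] at h1
    exact (key2 n (1 - y * c)).1 h1
  have hrad : c ∈ Ideal.jacobson (⊥ : Ideal A) := by
    rw [Ideal.mem_jacobson_iff]
    intro y
    have h1 : IsUnit (1 - (-y) * c) := main (-y)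
    have h2 : (1 : A) - (-y) * c = y * c + 1 := by noncomm_ring
    rw [h2] at h1
    obtain ⟨z, hz⟩ := h1.exists_left_inv
    refine ⟨z, ?_⟩
    rw [Ideal.mem_bot]
    have : z * (y * c + 1) = z * y * c + z := by noncomm_ring
    rw [this] at hz
    rw [hz]; simp
  rw [hA, Ideal.mem_bot, hc, sub_eq_zero] at hrad
  exact hrad
end

section
/- Let A be a semisimple complex unital Banach algebra and a, b ∈ A. If σ(x + a) = σ(x + b) for all x ∈ A, then a = b. -/
theorem eq_of_spectrum_variation {A : Type*} [NormedRing A] [NormedAlgebra ℂ A]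
    [CompleteSpace A] (hA : Ideal.jacobson (⊥ : Ideal A) = ⊥) (a b : A)
    (h : ∀ x : A, spectrum ℂ (x + a) = spectrum ℂ (x + b)) : a = b := by
  set c := b - a with hc
  -- translation by `c` preserves invertibility
  have H : ∀ z : A, IsUnit z ↔ IsUnit (z + c) := by
    intro z
    have h2 := h (z - a)
    have e1 : z - a + a = z := by abel
    have e2 : z - a + b = z + c := by rw [hc]; abel
    rw [e1, e2] at h2
    rw [← spectrum.zero_notMem_iff ℂ, ← spectrum.zero_notMem_iff ℂ, h2]
  -- key: 1 + y * c is a unit for every y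
  have key : ∀ y : A, IsUnit (1 + y * c) := by
    intro y
    set t : ℂ := ((‖y‖ * ‖(1 : A)‖ + 1 : ℝ) : ℂ) with ht
    have ht0 : t ≠ 0 := by
      simp only [ht, Ne, Complex.ofReal_eq_zero]
      positivity
    have hts : (-t) ∉ spectrum ℂ y := by
      intro hmem
      have := spectrum.subset_closedBall_norm_mul (𝕜 := ℂ) y hmem
      simp only [Metric.mem_closedBall, dist_zero_right, norm_neg, ht] at this
      rw [Complex.norm_real, Real.norm_eq_abs, abs_of_nonneg (by positivity)] at this
      have h1 : (0:ℝ) ≤ ‖y‖ * ‖(1:A)‖ := by positivity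
      linarith
    have hv : IsUnit (y + algebraMap ℂ A t) := by
      rw [spectrum.notMem_iff] at hts
      have : algebraMap ℂ A (-t) - y = -(y + algebraMap ℂ A t) := by
        rw [map_neg]; abel
      rw [this] at hts
      exact (IsUnit.neg_iff _).mp hts
    obtain ⟨v, hv⟩ := hv
    -- v⁻¹ + c is a unit, hence 1 + v c is a unit
    have h1 : IsUnit ((v⁻¹ : Aˣ) + c) := (H _).mp (Units.isUnit _)
    have h2 : IsUnit (1 + (y + algebraMap ℂ A t) * c) := by
      have : (v : A) * ((v⁻¹ : Aˣ) + c) = 1 + (y + algebraMap ℂ A t) * c := by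
        rw [mul_add, Units.mul_inv, hv]
      rw [← this]
      exact v.isUnit.mul h1
    -- now divide by the unit algebraMap t
    have hu : IsUnit (algebraMap ℂ A t) := (IsUnit.mk0 t ht0).map (algebraMap ℂ A)
    obtain ⟨e, he⟩ := hu
    have h3 : (e : A) * ((e⁻¹ : Aˣ) * (1 + y * c) + c) = 1 + (y + algebraMap ℂ A t) * c := by
      rw [mul_add, ← mul_assoc, Units.mul_inv, one_mul, add_mul, he]
      rw [Algebra.commutes t c, add_assoc]
    rw [← h3] at h2
    have h4 : IsUnit ((e⁻¹ : Aˣ) * (1 + y * c) + c) := by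
      rcases h2 with ⟨w, hw⟩
      exact ⟨(e⁻¹ : Aˣ) * w, by rw [Units.val_mul, hw, ← mul_assoc, Units.inv_mul, one_mul]⟩
    have h5 : IsUnit ((e⁻¹ : Aˣ) * (1 + y * c)) := (H _).mpr h4
    rcases h5 with ⟨w, hw⟩
    exact ⟨e * w, by rw [Units.val_mul, hw, ← mul_assoc, Units.mul_inv, one_mul]⟩
  -- conclude c is in the Jacobson radical
  have hmem : c ∈ Ideal.jacobson (⊥ : Ideal A) := by
    rw [Ideal.jacobson, Ideal.mem_sInf]
    rintro M ⟨-, hM⟩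
    by_contra hcM
    have htop : M ⊔ Ideal.span {c} = ⊤ := by
      refine hM.1.2 _ (left_lt_sup.2 fun hs => hcM ?_)
      exact hs (Ideal.subset_span rfl)
    have hone : (1 : A) ∈ M ⊔ Ideal.span {c} := htop ▸ Submodule.mem_top
    rw [Submodule.mem_sup] at hone
    obtain ⟨m, hm, z, hz, hmz⟩ := hone
    rw [Ideal.span, Submodule.mem_span_singleton] at hz
    obtain ⟨y, hy⟩ := hz
    have hmu : IsUnit m := by
      have : m = 1 + (-y) * c := by
        rw [neg_mul, ← smul_eq_mul, hy]
        rw [← hmz]; abel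
      rw [this]; exact key (-y)
    exact hM.1.1 (M.eq_top_of_isUnit_mem hm hmu)
  rw [hA, Ideal.mem_bot] at hmem
  have : b = a := by rw [← sub_eq_zero]; exact hmem
  exact this.symm
end

section
/- Let A be a semisimple complex unital Banach algebra and a, b ∈ A. If for every invertible x ∈ A, x + a is invertible if and only if x + b is invertible, then a = b. -/
/-!
Put `c = a - b`. If `v` and `v + a` are units, the hypothesis at the unit `v + a` (for the pair
`-a, -b`) shows that `v + c` is a unit, and at the unit `v + c` that `v + c + a` is one; hence
`v + n • c` is a unit for every `n`. Rescaling `(a, b)` by `z / n`, with `n` so large that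
`v + (z / n) • a` is a unit (the units are open), shows that `v + z • c` is a unit for every unit
`v` and every scalar `z`. For `y : A` pick `k` outside the spectrum of `y`; with the unit
`u = k - y`, `y * c + 1 = (1 - u * c) + k • c` and `1 - u * c = u * (u⁻¹ - c)`, so `y * c + 1` is a
unit for every `y`. Thus `c` lies in the Jacobson radical, which is zero.
-/

open Filter

def UnitShiftEquiv {R : Type*} [Ring R] (a b : R) : Prop :=
  ∀ x : R, IsUnit x → (IsUnit (x + a) ↔ IsUnit (x + b))

namespace UnitShiftEquiv

section Ring

variable {R : Type*} [Ring R] {a b v : R}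

theorem neg (h : UnitShiftEquiv a b) : UnitShiftEquiv (-a) (-b) := by
  intro x hx
  rw [← IsUnit.neg_iff (x + -a), ← IsUnit.neg_iff (x + -b)]
  simpa only [neg_add, neg_neg] using h (-x) hx.neg

theorem isUnit_add_sub (h : UnitShiftEquiv a b) (hv : IsUnit v) (hva : IsUnit (v + a)) :
    IsUnit (v + (a - b)) := by
  have := (h.neg (v + a) hva).mp (by rwa [add_neg_cancel_right])
  rwa [← sub_eq_add_neg, add_sub_assoc] at this

theorem isUnit_add_sub_add (h : UnitShiftEquiv a b) (hv : IsUnit v) (hva : IsUnit (v + a)) :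
    IsUnit (v + (a - b) + a) :=
  (h _ (h.isUnit_add_sub hv hva)).mpr (by rwa [add_assoc, sub_add_cancel])

theorem isUnit_add_nsmul_sub (h : UnitShiftEquiv a b) (hv : IsUnit v) (hva : IsUnit (v + a))
    (n : ℕ) : IsUnit (v + n • (a - b)) := by
  suffices IsUnit (v + n • (a - b)) ∧ IsUnit (v + n • (a - b) + a) from this.1
  induction n with
  | zero => simpa using ⟨hv, hva⟩
  | succ n ih =>
    rw [succ_nsmul, ← add_assoc]
    exact ⟨h.isUnit_add_sub ih.1 ih.2, h.isUnit_add_sub_add ih.1 ih.2⟩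

end Ring

theorem smul {𝕜 A : Type*} [Field 𝕜] [Ring A] [Algebra 𝕜 A] {a b : A}
    (h : UnitShiftEquiv a b) (t : 𝕜) : UnitShiftEquiv (t • a) (t • b) := by
  rcases eq_or_ne t 0 with rfl | ht
  · simp only [zero_smul]
    exact fun _ _ => Iff.rfl
  intro x hx
  have hshift : ∀ d : A, x + t • d = Units.mk0 t ht • (t⁻¹ • x + d) := fun d => by
    rw [Units.smul_def, Units.val_mk0, smul_add, smul_inv_smul₀ ht]
  rw [hshift, hshift, isUnit_smul_iff, isUnit_smul_iff]
  exact h _ ((isUnit_smul_iff (Units.mk0 t ht)⁻¹ x).mpr hx)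

theorem isUnit_add_smul_sub {𝕜 A : Type*} [RCLike 𝕜] [NormedRing A] [NormedAlgebra 𝕜 A]
    [CompleteSpace A] {a b v : A} (h : UnitShiftEquiv a b) (hv : IsUnit v) (z : 𝕜) :
    IsUnit (v + z • (a - b)) := by
  have hsmall : ∀ᶠ n : ℕ in atTop, IsUnit (v + (z / n) • a) := by
    have hcont : Continuous fun t : 𝕜 => v + t • a := by fun_prop
    exact ((hcont.tendsto' 0 v (by simp)).comp
      (tendsto_const_div_atTop_nhds_zero_nat z)).eventually (Units.isOpen.mem_nhds hv)
  obtain ⟨n, hn, hn0⟩ := (hsmall.and (eventually_ne_atTop 0)).exists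
  have := (h.smul (z / n)).isUnit_add_nsmul_sub hv hn n
  rwa [← smul_sub, ← Nat.cast_smul_eq_nsmul 𝕜, smul_smul,
    mul_div_cancel₀ _ (Nat.cast_ne_zero.mpr hn0)] at this

end UnitShiftEquiv

theorem mem_jacobson_bot_of_forall_isUnit_add_smul {𝕜 A : Type*} [NontriviallyNormedField 𝕜]
    [NormedRing A] [NormedAlgebra 𝕜 A] [CompleteSpace A] {c : A}
    (hc : ∀ v : A, IsUnit v → ∀ z : 𝕜, IsUnit (v + z • c)) : c ∈ Ideal.jacobson ⊥ := by
  refine Ideal.mem_jacobson_iff.mpr fun y => ?_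
  suffices hyc : IsUnit (y * c + 1) by
    obtain ⟨w, hw⟩ := hyc
    exact ⟨↑w⁻¹, by rw [Ideal.mem_bot, mul_assoc, ← mul_add_one, ← hw, Units.inv_mul, sub_self]⟩
  obtain ⟨k, hk⟩ := NormedField.exists_lt_norm 𝕜 (‖y‖ * ‖(1 : A)‖)
  obtain ⟨u, hu⟩ : IsUnit (algebraMap 𝕜 A k - y) := spectrum.mem_resolventSet_of_norm_lt_mul hk
  have hu' : IsUnit (1 - u * c) := by
    have := u.isUnit.mul (hc _ u⁻¹.isUnit (-1))
    rwa [neg_one_smul, ← sub_eq_add_neg, mul_sub, Units.mul_inv] at this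
  convert hc _ hu' k using 1
  rw [hu, Algebra.algebraMap_eq_smul_one, sub_mul, smul_mul_assoc, one_mul]
  abel

theorem eq_of_invertibility_variation_on_units {A : Type*} [NormedRing A]
    [NormedAlgebra ℂ A] [CompleteSpace A] (hA : Ideal.jacobson (⊥ : Ideal A) = ⊥)
    (a b : A) (h : ∀ x : A, IsUnit x → (IsUnit (x + a) ↔ IsUnit (x + b))) : a = b := by
  have hab : a - b ∈ Ideal.jacobson ⊥ :=
    mem_jacobson_bot_of_forall_isUnit_add_smul (𝕜 := ℂ) fun _ hv z =>
      UnitShiftEquiv.isUnit_add_smul_sub h hv z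
  rwa [hA, Ideal.mem_bot, sub_eq_zero] at hab
end

section
/- Let A be a complex unital Banach algebra, a, b ∈ A, and suppose that for all x ∈ A and λ ∈ ℂ with |λ| > ρ(x), λ ∈ σ(x + a) if and only if λ ∈ σ(x + b). Then for every quasinilpotent q ∈ A and every n ∈ ℕ, max{ρ(n(b−a)+q), ρ(nb−(n−1)a+q)} ≤ ‖b‖ + ‖q‖. -/
/-!
Put `u n = n • (b - a) + q` and `v n = (n + 1) • b - n • a + q`; then `u 0 = q`, `v 0 = b + q`,
`u (n + 1) = v n - a` with `v n - b = u n`, and `v (n + 1) = u (n + 1) + b` with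
`u (n + 1) + a = v n`. If `ρ x ≤ M`, the hypothesis identifies the spectra of `x + a` and `x + b`
outside the closed disc of radius `M`, so a bound `M` on `ρ (x + a)` passes to `ρ (x + b)`;
applied to `-x` it likewise passes a bound on `ρ (x - b)` to `ρ (x - a)`. Alternating these two
transfers, starting from `ρ q = 0` and `ρ (b + q) ≤ ‖b + q‖`, bounds every `u n` and `v n` by
`‖b‖ + ‖q‖`.
-/

open scoped ENNReal NNReal

section

variable {𝕜 A : Type*}

/-- Unlike `spectrum.spectralRadius_le_nnnorm`, this needs no `NormOneClass A`: the Gelfand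
`liminf` bound only involves `‖x ^ n‖` for large `n`. -/
theorem spectralRadius_le_nnnorm' [NormedField 𝕜] [NormedRing A]
    [NormedAlgebra 𝕜 A] [CompleteSpace A] (x : A) :
    spectralRadius 𝕜 x ≤ ‖x‖₊ := by
  refine (spectrum.spectralRadius_le_liminf_pow_nnnorm_pow_one_div 𝕜 x).trans <|
    Filter.liminf_le_of_frequently_le' <| (Filter.eventually_atTop.2 ⟨1, fun n hn => ?_⟩).frequently
  have hn' : (n : ℝ) ≠ 0 := by positivity
  calc (‖x ^ n‖₊ : ℝ≥0∞) ^ (1 / n : ℝ)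
      ≤ ((‖x‖₊ : ℝ≥0∞) ^ n) ^ (1 / n : ℝ) := by
        gcongr
        exact_mod_cast nnnorm_pow_le' x hn
    _ = ‖x‖₊ := by
        rw [← ENNReal.rpow_natCast, ← ENNReal.rpow_mul, mul_one_div_cancel hn', ENNReal.rpow_one]

section Algebra

variable [NormedField 𝕜] [Ring A] [Algebra 𝕜 A]

theorem spectralRadius_neg (x : A) : spectralRadius 𝕜 (-x) = spectralRadius 𝕜 x := by
  rw [spectralRadius, ← spectrum.neg_eq, ← Set.image_neg_eq_neg, iSup_image]
  simp only [nnnorm_neg, spectralRadius]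

theorem spectralRadius_le_of_mem_spectrum_iff {y z : A} {M : ℝ≥0∞}
    (hyz : ∀ lam : 𝕜, M < ‖lam‖₊ → (lam ∈ spectrum 𝕜 y ↔ lam ∈ spectrum 𝕜 z))
    (hy : spectralRadius 𝕜 y ≤ M) : spectralRadius 𝕜 z ≤ M := by
  refine iSup₂_le fun lam hlam => ?_
  by_contra! hM
  exact hM.not_ge <| hy.trans' <| le_iSup₂ (α := ℝ≥0∞) lam <| (hyz lam hM).2 hlam

variable (𝕜) in
def SpectraAgreeBeyondRadius (a b : A) : Prop :=
  ∀ (x : A) (lam : 𝕜), spectralRadius 𝕜 x < ‖lam‖₊ →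
    (lam ∈ spectrum 𝕜 (x + a) ↔ lam ∈ spectrum 𝕜 (x + b))

namespace SpectraAgreeBeyondRadius

variable {a b : A}

theorem mem_spectrum_sub_iff (h : SpectraAgreeBeyondRadius 𝕜 a b) {x : A} {lam : 𝕜}
    (hlam : spectralRadius 𝕜 x < ‖lam‖₊) :
    lam ∈ spectrum 𝕜 (x - a) ↔ lam ∈ spectrum 𝕜 (x - b) := by
  have key := h (-x) (-lam) (by rwa [spectralRadius_neg, nnnorm_neg])
  rwa [neg_add_eq_sub, neg_add_eq_sub, ← neg_sub x a, ← neg_sub x b, ← spectrum.neg_eq,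
    ← spectrum.neg_eq, Set.neg_mem_neg, Set.neg_mem_neg] at key

theorem spectralRadius_add_le (h : SpectraAgreeBeyondRadius 𝕜 a b) {x : A} {M : ℝ≥0∞}
    (hx : spectralRadius 𝕜 x ≤ M) (hxa : spectralRadius 𝕜 (x + a) ≤ M) :
    spectralRadius 𝕜 (x + b) ≤ M :=
  spectralRadius_le_of_mem_spectrum_iff (fun _ hlam => h x _ (hx.trans_lt hlam)) hxa

theorem spectralRadius_sub_le (h : SpectraAgreeBeyondRadius 𝕜 a b) {x : A} {M : ℝ≥0∞}
    (hx : spectralRadius 𝕜 x ≤ M) (hxb : spectralRadius 𝕜 (x - b) ≤ M) :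
    spectralRadius 𝕜 (x - a) ≤ M :=
  spectralRadius_le_of_mem_spectrum_iff
    (fun _ hlam => (h.mem_spectrum_sub_iff (hx.trans_lt hlam)).symm) hxb

theorem spectralRadius_natCast_smul_sub_add_le (h : SpectraAgreeBeyondRadius 𝕜 a b) {q : A}
    {M : ℝ≥0∞} (hq : spectralRadius 𝕜 q ≤ M) (hbq : spectralRadius 𝕜 (b + q) ≤ M) (n : ℕ) :
    spectralRadius 𝕜 ((n : 𝕜) • (b - a) + q) ≤ M ∧
      spectralRadius 𝕜 (((n : 𝕜) + 1) • b - (n : 𝕜) • a + q) ≤ M := by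
  induction n with
  | zero => simpa [add_comm q] using And.intro hq hbq
  | succ n ih =>
    obtain ⟨hu, hv⟩ := ih
    have hu' : spectralRadius 𝕜 (((n + 1 : ℕ) : 𝕜) • (b - a) + q) ≤ M := by
      convert h.spectralRadius_sub_le hv (by convert hu using 2; module) using 2
      push_cast; module
    refine ⟨hu', ?_⟩
    convert h.spectralRadius_add_le hu' (by convert hv using 2; push_cast; module) using 2
    push_cast; module

end SpectraAgreeBeyondRadius

end Algebra

end

theorem key_inductive_estimate {A : Type*} [NormedRing A] [NormedAlgebra ℂ A]
    [CompleteSpace A] (a b : A)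
    (h : ∀ (x : A) (lam : ℂ), spectralRadius ℂ x < (‖lam‖₊ : ℝ≥0∞) →
      (lam ∈ spectrum ℂ (x + a) ↔ lam ∈ spectrum ℂ (x + b))) :
    ∀ q : A, spectralRadius ℂ q = 0 → ∀ n : ℕ, 1 ≤ n →
      max (spectralRadius ℂ ((n : ℂ) • (b - a) + q))
          (spectralRadius ℂ ((n : ℂ) • b - ((n : ℂ) - 1) • a + q))
        ≤ (‖b‖₊ : ℝ≥0∞) + (‖q‖₊ : ℝ≥0∞) := by
  intro q hq n hn
  have hbq : spectralRadius ℂ (b + q) ≤ (‖b‖₊ : ℝ≥0∞) + (‖q‖₊ : ℝ≥0∞) :=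
    (spectralRadius_le_nnnorm' _).trans <| mod_cast nnnorm_add_le b q
  have bound := SpectraAgreeBeyondRadius.spectralRadius_natCast_smul_sub_add_le (𝕜 := ℂ) h
    (hq.trans_le bot_le) hbq
  obtain ⟨k, rfl⟩ := Nat.exists_eq_add_of_le' hn
  refine max_le (bound (k + 1)).1 ?_
  simpa using (bound k).2
end

section
/- Let A be a complex unital Banach algebra, a, b ∈ A with b − a such that ρ(λ(b−a) + q) ≤ ‖q‖ for all λ ∈ ℂ and all quasinilpotent q. Then ρ((b−a) + q) = 0 for every quasinilpotent q; consequently, if A is semisimple, a = b. -/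
/-!
Hadamard's three-circles estimate for the powers `F ^ 2 ^ j` of an entire `F : ℂ → A`, combined
with Gelfand's formula, bounds the spectral radius of `F z` by an interpolation of bounds on two
circles. Letting the outer circle grow gives a Liouville theorem: if `ρ ∘ F` is bounded and
vanishes at one point, it vanishes everywhere. Applied to `w ↦ w • (b - a) + q` this gives the
first claim.

For the second, conjugating `x = b - a` by `exp (w • c)` gives an entire family whose difference
quotient at `0` is quasinilpotent away from `0`, so by the same Liouville theorem its value
`c * x - x * c` at `0` is quasinilpotent too. Then `x` lies in every maximal left ideal `L`:
otherwise either `L + L x = A`, which puts `1 - (c * x - x * c)` into `L` for some `c ∈ L`, or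
right multiplication by `x` acts on the simple Banach module `A ⧸ L`, where by Schur's lemma and
the nonemptiness of spectra it is a scalar, so `x` is congruent modulo `L` to a nonzero scalar.
-/

open scoped ENNReal NNReal
open Filter Topology

theorem Complex.norm_le_of_forall_sphere_norm_le {E : Type*} [NormedAddCommGroup E]
    [NormedSpace ℂ E] {G : ℂ → E} (hG : Differentiable ℂ G) {r R a b : ℝ} (hr : 0 < r)
    (hrR : r < R) (ha : ∀ w : ℂ, ‖w‖ = r → ‖G w‖ ≤ a) (hb : ∀ w : ℂ, ‖w‖ = R → ‖G w‖ ≤ b)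
    {z : ℂ} (hrz : r ≤ ‖z‖) (hzR : ‖z‖ ≤ R) :
    ‖G z‖ ≤ a ^ (1 - (Real.log ‖z‖ - Real.log r) / (Real.log R - Real.log r)) *
      b ^ ((Real.log ‖z‖ - Real.log r) / (Real.log R - Real.log r)) := by
  have hz : z ≠ 0 := norm_pos_iff.mp (hr.trans_le hrz)
  have hR : 0 < R := hr.trans hrR
  -- three lines for `G ∘ exp` on the strip `log r ≤ re ≤ log R`
  have hB : BddAbove ((norm ∘ G ∘ exp) ''
      HadamardThreeLines.verticalClosedStrip (Real.log r) (Real.log R)) := by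
    refine ((isCompact_closedBall (0 : ℂ) R).image
      (continuous_norm.comp hG.continuous)).bddAbove.mono ?_
    rintro _ ⟨s, hs, rfl⟩
    refine ⟨exp s, ?_, rfl⟩
    rw [mem_closedBall_zero_iff, norm_exp, ← Real.exp_log hR]
    exact Real.exp_le_exp.mpr hs.2
  have key := HadamardThreeLines.norm_le_interp_of_mem_verticalClosedStrip' (f := G ∘ exp)
    (z := log z) (a := a) (b := b) (Real.log_lt_log hr hrR)
    ⟨by rw [log_re]; exact Real.log_le_log hr hrz,
      by rw [log_re]; exact Real.log_le_log (hr.trans_le hrz) hzR⟩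
    (hG.comp differentiable_exp).diffContOnCl hB
    (fun s hs => ha _ (by rw [norm_exp, show s.re = _ from hs, Real.exp_log hr]))
    (fun s hs => hb _ (by rw [norm_exp, show s.re = _ from hs, Real.exp_log hR]))
  simpa [exp_log hz, log_re] using key

lemma Real.tendsto_rpow_mul_rpow_div_log_sub_atTop {κ c s r : ℝ} (hκ : 0 < κ) (hc : 0 < c) :
    Tendsto (fun R => κ ^ (1 - (s - r) / (Real.log R - r)) * c ^ ((s - r) / (Real.log R - r)))
      atTop (𝓝 κ) := by
  have ht : Tendsto (fun R => (s - r) / (Real.log R - r)) atTop (𝓝 0) :=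
    (Real.tendsto_log_atTop.atTop_add (tendsto_const_nhds (x := -r))).const_div_atTop _
  have hcont : ContinuousAt (fun t : ℝ => κ ^ (1 - t) * c ^ t) 0 :=
    ((Real.continuousAt_const_rpow hκ.ne').comp (by fun_prop)).mul
      (Real.continuousAt_const_rpow hc.ne')
  simpa [Function.comp_def] using hcont.tendsto.comp ht

lemma norm_pow_two_pow_lt_of_le {A : Type*} [SeminormedRing A] {y : A} {c : ℝ} {i j : ℕ}
    (hij : i ≤ j) (h : ‖y ^ 2 ^ i‖ < c ^ 2 ^ i) : ‖y ^ 2 ^ j‖ < c ^ 2 ^ j := by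
  induction j, hij using Nat.le_induction with
  | base => exact h
  | succ j _ ih =>
    calc ‖y ^ 2 ^ (j + 1)‖ = ‖y ^ 2 ^ j * y ^ 2 ^ j‖ := by rw [← pow_add, ← two_mul, pow_succ']
      _ ≤ ‖y ^ 2 ^ j‖ * ‖y ^ 2 ^ j‖ := norm_mul_le _ _
      _ < c ^ 2 ^ j * c ^ 2 ^ j := mul_self_lt_mul_self (norm_nonneg _) ih
      _ = c ^ 2 ^ (j + 1) := by rw [← pow_add, ← two_mul, pow_succ']

namespace spectrum

section Algebra

variable {𝕜 A : Type*} [NormedField 𝕜] [Ring A] [Algebra 𝕜 A]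

lemma spectralRadius_eq_zero_iff {a : A} :
    spectralRadius 𝕜 a = 0 ↔ ∀ k ∈ spectrum 𝕜 a, k = 0 := by
  simp [spectralRadius, ENNReal.iSup_eq_zero]

lemma spectralRadius_units_conj (u : Aˣ) (a : A) :
    spectralRadius 𝕜 (u * a * ↑u⁻¹) = spectralRadius 𝕜 a := by
  simp [spectralRadius]

lemma isUnit_algebraMap_sub {y : A} (hy : spectralRadius 𝕜 y = 0) {c : 𝕜} (hc : c ≠ 0) :
    IsUnit (algebraMap 𝕜 A c - y) :=
  notMem_iff.mp fun h => hc (spectralRadius_eq_zero_iff.mp hy c h)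

end Algebra

variable {A : Type*} [NormedRing A] [NormedAlgebra ℂ A] [CompleteSpace A]

lemma spectralRadius_smul_eq_zero {y : A} (hy : spectralRadius ℂ y = 0) (t : ℂ) :
    spectralRadius ℂ (t • y) = 0 := by
  nontriviality A
  rw [spectralRadius_eq_zero_iff] at hy ⊢
  rw [smul_eq_smul _ _ (spectrum.nonempty y)]
  rintro _ ⟨k, hk, rfl⟩
  simp [hy k hk]

lemma spectralRadius_le_nnnorm_mul_nnnorm_one (y : A) :
    spectralRadius ℂ y ≤ ‖y‖₊ * ‖(1 : A)‖₊ := by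
  simpa using spectralRadius_le_pow_nnnorm_pow_one_div ℂ y 0

lemma tendsto_norm_pow_two_pow (y : A) :
    Tendsto (fun j : ℕ => ENNReal.ofReal (‖y ^ 2 ^ j‖ ^ (1 / (2 ^ j : ℕ) : ℝ))) atTop
      (𝓝 (spectralRadius ℂ y)) :=
  (pow_norm_pow_one_div_tendsto_nhds_spectralRadius y).comp
    (tendsto_pow_atTop_atTop_of_one_lt one_lt_two)

lemma spectralRadius_le_of_eventually_norm_pow_two_pow_le {y : A} {B : ℝ} (hB : 0 ≤ B)
    (h : ∀ᶠ j in atTop, ‖y ^ 2 ^ j‖ ≤ B ^ 2 ^ j) : spectralRadius ℂ y ≤ ENNReal.ofReal B := by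
  refine le_of_tendsto (tendsto_norm_pow_two_pow y) (h.mono fun j hj => ?_)
  refine ENNReal.ofReal_le_ofReal ?_
  calc ‖y ^ 2 ^ j‖ ^ (1 / (2 ^ j : ℕ) : ℝ) ≤ (B ^ 2 ^ j) ^ (1 / (2 ^ j : ℕ) : ℝ) := by gcongr
    _ = B := by rw [one_div, Real.pow_rpow_inv_natCast hB (by positivity)]

lemma exists_norm_pow_two_pow_lt {y : A} {c : ℝ} (h : spectralRadius ℂ y < ENNReal.ofReal c) :
    ∃ j, ‖y ^ 2 ^ j‖ < c ^ 2 ^ j := by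
  have hc : 0 < c := ENNReal.ofReal_pos.mp (pos_of_gt h)
  obtain ⟨j, hj⟩ := ((tendsto_norm_pow_two_pow y).eventually_lt_const h).exists
  refine ⟨j, ?_⟩
  rw [ENNReal.ofReal_lt_ofReal_iff hc] at hj
  calc ‖y ^ 2 ^ j‖ = (‖y ^ 2 ^ j‖ ^ (1 / (2 ^ j : ℕ) : ℝ)) ^ 2 ^ j := by
        rw [one_div, Real.rpow_inv_natCast_pow (norm_nonneg _) (by positivity)]
    _ < c ^ 2 ^ j := by gcongr

-- The sets `{w | ‖F w ^ 2 ^ j‖ < c ^ 2 ^ j}` increase with `j`, so one of them covers `K`.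
lemma eventually_forall_norm_pow_two_pow_lt {X : Type*} [TopologicalSpace X] {F : X → A}
    (hF : Continuous F) {K : Set X} (hK : IsCompact K) {c : ℝ}
    (h : ∀ w ∈ K, spectralRadius ℂ (F w) < ENNReal.ofReal c) :
    ∀ᶠ j in atTop, ∀ w ∈ K, ‖F w ^ 2 ^ j‖ < c ^ 2 ^ j := by
  obtain ⟨j₀, hj₀⟩ := hK.elim_directed_cover (fun j => {w | ‖F w ^ 2 ^ j‖ < c ^ 2 ^ j})
    (fun j => isOpen_lt (by fun_prop) continuous_const)
    (fun w hw => Set.mem_iUnion.mpr (exists_norm_pow_two_pow_lt (h w hw)))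
    (Monotone.directed_le fun i j hij w hw => norm_pow_two_pow_lt_of_le hij hw)
  exact eventually_atTop.mpr ⟨j₀, fun j hj w hw => norm_pow_two_pow_lt_of_le hj (hj₀ hw)⟩

lemma spectralRadius_le_of_forall_sphere_norm_pow_le {F : ℂ → A} (hF : Differentiable ℂ F)
    {r R a b : ℝ} (hr : 0 < r) (hrR : r < R) (ha : 0 ≤ a) (hb : 0 ≤ b)
    (har : ∀ᶠ j in atTop, ∀ w : ℂ, ‖w‖ = r → ‖F w ^ 2 ^ j‖ ≤ a ^ 2 ^ j)
    (hbR : ∀ᶠ j in atTop, ∀ w : ℂ, ‖w‖ = R → ‖F w ^ 2 ^ j‖ ≤ b ^ 2 ^ j)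
    {z : ℂ} (hrz : r ≤ ‖z‖) (hzR : ‖z‖ ≤ R) :
    spectralRadius ℂ (F z) ≤ ENNReal.ofReal
      (a ^ (1 - (Real.log ‖z‖ - Real.log r) / (Real.log R - Real.log r)) *
        b ^ ((Real.log ‖z‖ - Real.log r) / (Real.log R - Real.log r))) := by
  set t := (Real.log ‖z‖ - Real.log r) / (Real.log R - Real.log r)
  refine spectralRadius_le_of_eventually_norm_pow_two_pow_le (by positivity) ?_
  filter_upwards [har, hbR] with j hjr hjR
  calc ‖F z ^ 2 ^ j‖ ≤ (a ^ 2 ^ j) ^ (1 - t) * (b ^ 2 ^ j) ^ t :=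
        Complex.norm_le_of_forall_sphere_norm_le (hF.pow _) hr hrR hjr hjR hrz hzR
    _ = (a ^ (1 - t) * b ^ t) ^ 2 ^ j := by
        rw [mul_pow, ← Real.rpow_pow_comm ha, ← Real.rpow_pow_comm hb]

end spectrum

open spectrum

theorem Differentiable.spectralRadius_eq_zero_of_bounded {A : Type*} [NormedRing A]
    [NormedAlgebra ℂ A] [CompleteSpace A] {F : ℂ → A} (hF : Differentiable ℂ F) {M : ℝ≥0}
    (hM : ∀ w, spectralRadius ℂ (F w) ≤ M) {z₀ : ℂ} (h₀ : spectralRadius ℂ (F z₀) = 0)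
    (z : ℂ) : spectralRadius ℂ (F z) = 0 := by
  wlog hz₀ : z₀ = 0 generalizing F z₀ z
  · simpa using this (F := fun w => F (w + z₀)) (hF.comp (by fun_prop)) (fun w => hM _)
      (z₀ := 0) (by simpa using h₀) (z - z₀) rfl
  subst hz₀
  rcases eq_or_ne z 0 with rfl | hz
  · exact h₀
  refine le_antisymm (ENNReal.le_of_forall_pos_le_add fun κ hκ _ => ?_) bot_le
  rw [zero_add, ← ENNReal.ofReal_coe_nnreal]
  obtain ⟨j₀, hj₀⟩ := exists_norm_pow_two_pow_lt (y := F 0) (c := κ) (by simpa [h₀] using hκ)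
  obtain ⟨δ, hδ, hball⟩ := Metric.eventually_nhds_iff.mp
    (((hF.continuous.pow (2 ^ j₀)).norm.tendsto 0).eventually_lt_const hj₀)
  set r := min (δ / 2) ‖z‖
  have hr : 0 < r := lt_min (half_pos hδ) (norm_pos_iff.mpr hz)
  have hsmall : ∀ᶠ j in atTop, ∀ w : ℂ, ‖w‖ = r → ‖F w ^ 2 ^ j‖ ≤ κ ^ 2 ^ j := by
    refine eventually_atTop.mpr ⟨j₀, fun j hj w hw => (norm_pow_two_pow_lt_of_le hj (hball ?_)).le⟩
    rw [dist_zero_right, hw]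
    exact (min_le_left _ _).trans_lt (half_lt_self hδ)
  have hlarge (R : ℝ) :
      ∀ᶠ j in atTop, ∀ w : ℂ, ‖w‖ = R → ‖F w ^ 2 ^ j‖ ≤ (M + 1) ^ 2 ^ j := by
    refine (eventually_forall_norm_pow_two_pow_lt hF.continuous (isCompact_sphere 0 R)
      fun w _ => (hM w).trans_lt ?_).mono fun j hj w hw => (hj w (by simpa using hw)).le
    rw [← ENNReal.ofReal_coe_nnreal, ENNReal.ofReal_lt_ofReal_iff (by positivity)]
    exact lt_add_one _
  -- let the outer radius tend to infinity in the three-circles bound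
  refine ge_of_tendsto (ENNReal.tendsto_ofReal (Real.tendsto_rpow_mul_rpow_div_log_sub_atTop
    (s := Real.log ‖z‖) (r := Real.log r) hκ (by positivity : (0 : ℝ) < M + 1))) ?_
  filter_upwards [eventually_gt_atTop ‖z‖] with R hR
  exact spectralRadius_le_of_forall_sphere_norm_pow_le hF hr ((min_le_right _ _).trans_lt hR)
    κ.2 (by positivity) hsmall (hlarge R) (min_le_right _ _) hR.le

namespace spectrum

variable {A : Type*} [NormedRing A] [NormedAlgebra ℂ A] [CompleteSpace A]

lemma spectralRadius_smul_add_eq_zero {x q : A}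
    (h : ∀ t : ℂ, spectralRadius ℂ (t • x + q) ≤ ‖q‖₊) (hq : spectralRadius ℂ q = 0) (t : ℂ) :
    spectralRadius ℂ (t • x + q) = 0 :=
  ((differentiable_id.smul_const x).add_const q).spectralRadius_eq_zero_of_bounded h
    (z₀ := 0) (by simpa using hq) t

lemma spectralRadius_units_conj_sub_eq_zero {x : A}
    (hx : ∀ q, spectralRadius ℂ q = 0 → spectralRadius ℂ (x + q) = 0) (u : Aˣ) :
    spectralRadius ℂ (u * x * ↑u⁻¹ - x) = 0 := by
  have hq : spectralRadius ℂ (↑u⁻¹ * -x * ↑u⁻¹⁻¹) = 0 := by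
    rw [spectralRadius_units_conj, ← neg_one_smul ℂ x]
    exact spectralRadius_smul_eq_zero (by simpa using hx 0 (by simp)) _
  have hconj : (u : A) * x * ↑u⁻¹ - x = u * (x + ↑u⁻¹ * -x * ↑u⁻¹⁻¹) * ↑u⁻¹ := by
    simp [mul_add, add_mul, mul_assoc, sub_eq_add_neg]
  rw [hconj, spectralRadius_units_conj]
  exact hx _ hq

open NormedSpace in
lemma spectralRadius_commutator_eq_zero {x : A}
    (hx : ∀ q, spectralRadius ℂ q = 0 → spectralRadius ℂ (x + q) = 0) (c : A) :
    spectralRadius ℂ (c * x - x * c) = 0 := by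
  let : NormedAlgebra ℚ A := NormedAlgebra.restrictScalars ℚ ℂ A
  let u : ℂ → Aˣ := fun w =>
    ⟨exp (w • c), exp (-(w • c)),
      by rw [← exp_add_of_commute (Commute.refl _).neg_right, add_neg_cancel, exp_zero],
      by rw [← exp_add_of_commute (Commute.refl _).neg_left, neg_add_cancel, exp_zero]⟩
  let f : ℂ → A := fun w => u w * x * ↑(u w)⁻¹
  have hf (w : ℂ) : HasDerivAt f (exp (w • c) * c * x * exp (-(w • c)) +
      exp (w • c) * x * (-c * exp (-(w • c)))) w := by
    have h2 := hasDerivAt_exp_smul_const' (-c) w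
    simp only [smul_neg] at h2
    exact ((hasDerivAt_exp_smul_const c w).mul_const x).mul h2
  have hf0 : f 0 = x := by simp [f, u]
  have hg : Differentiable ℂ (dslope f 0) := differentiableOn_univ.mp <|
    (Complex.differentiableOn_dslope univ_mem).mpr fun w _ =>
      (hf w).differentiableAt.differentiableWithinAt
  have hgw (w : ℂ) (hw : w ≠ 0) : spectralRadius ℂ (dslope f 0 w) = 0 := by
    rw [dslope_of_ne _ hw, slope_def_module, hf0]
    exact spectralRadius_smul_eq_zero (spectralRadius_units_conj_sub_eq_zero hx (u w)) _
  have hM (w : ℂ) : spectralRadius ℂ (dslope f 0 w) ≤ ‖dslope f 0 0‖₊ * ‖(1 : A)‖₊ := by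
    rcases eq_or_ne w 0 with rfl | hw
    · exact spectralRadius_le_nnnorm_mul_nnnorm_one _
    · simp [hgw w hw]
  have h0 := hg.spectralRadius_eq_zero_of_bounded (M := ‖dslope f 0 0‖₊ * ‖(1 : A)‖₊)
    (by exact_mod_cast hM) (hgw 1 one_ne_zero) 0
  rw [dslope_same, (hf 0).deriv] at h0
  simpa [sub_eq_add_neg] using h0

end spectrum

lemma Ideal.IsMaximal.exists_algebraMap_sub_mem_of_mul_mem {A : Type*} [NormedRing A]
    [NormedAlgebra ℂ A] [CompleteSpace A] {L : Ideal A} (hL : L.IsMaximal) {z : A}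
    (hz : ∀ y ∈ L, y * z ∈ L) : ∃ c : ℂ, algebraMap ℂ A c - z ∈ L := by
  have : Nontrivial (A ⧸ L) := Submodule.Quotient.nontrivial_iff.mpr hL.ne_top
  let φ : (A ⧸ L) →L[ℂ] (A ⧸ L) :=
    ⟨(L.mapQ L (LinearMap.toSpanSingleton A A z) fun y hy => hz y hy).restrictScalars ℂ,
      continuous_quot_lift _ (continuous_quot_mk.comp (continuous_mul_const z))⟩
  obtain ⟨c, hc⟩ := spectrum.nonempty φ
  have hcz (y : A) (hy : y ∈ L) : y * (algebraMap ℂ A c - z) ∈ L := by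
    rw [mul_sub, ← Algebra.commutes, ← Algebra.smul_def]
    exact L.sub_mem (L.smul_of_tower_mem c hy) (hz y hy)
  -- Schur's lemma applies to the `A`-linear map `algebraMap ℂ _ c - φ` of the simple module `A ⧸ L`
  let ψ : A ⧸ L →ₗ[A] A ⧸ L :=
    L.mapQ L (LinearMap.toSpanSingleton A A (algebraMap ℂ A c - z)) hcz
  have hψ : ⇑ψ = ⇑(algebraMap ℂ _ c - φ) := by
    ext ξ
    obtain ⟨y, rfl⟩ := Submodule.Quotient.mk_surjective L ξ
    change (Submodule.Quotient.mk (y * (algebraMap ℂ A c - z)) : A ⧸ L) =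
      c • Submodule.Quotient.mk y - Submodule.Quotient.mk (y * z)
    rw [mul_sub, ← Algebra.commutes, ← Algebra.smul_def, Submodule.Quotient.mk_sub,
      Submodule.Quotient.mk_smul]
  have : IsSimpleModule A (A ⧸ L) := isSimpleModule_iff_isCoatom.mpr hL.out
  rcases ψ.bijective_or_eq_zero with hbij | hzero
  · exact absurd (ContinuousLinearMap.isUnit_iff_bijective.mpr (hψ ▸ hbij)) hc
  · refine ⟨c, (Submodule.Quotient.mk_eq_zero L).mp ?_⟩
    have h1 : ψ (Submodule.Quotient.mk 1) =
        Submodule.Quotient.mk (1 * (algebraMap ℂ A c - z)) := rfl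
    simpa [hzero] using h1.symm

theorem mem_jacobson_bot_of_forall_spectralRadius_add_eq_zero {A : Type*} [NormedRing A]
    [NormedAlgebra ℂ A] [CompleteSpace A] {x : A}
    (hx : ∀ q, spectralRadius ℂ q = 0 → spectralRadius ℂ (x + q) = 0) :
    x ∈ Ideal.jacobson (⊥ : Ideal A) := by
  refine Submodule.mem_sInf.mpr fun L ⟨_, hL⟩ => ?_
  have hnotunit (y : A) (hy : y ∈ L) : ¬IsUnit y := fun hu =>
    hL.ne_top (Ideal.eq_top_of_isUnit_mem L hy hu)
  by_contra hxL
  by_cases hLx : ∀ y ∈ L, y * x ∈ L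
  · obtain ⟨c, hc⟩ := hL.exists_algebraMap_sub_mem_of_mul_mem hLx
    have hc0 : c ≠ 0 := by
      rintro rfl
      exact hxL (by simpa using L.neg_mem hc)
    exact hnotunit _ hc (isUnit_algebraMap_sub (by simpa using hx 0 (by simp)) hc0)
  · obtain ⟨a, ha, hax⟩ : ∃ a ∈ L, a * x ∉ L := by simpa using hLx
    obtain ⟨b, l, hl, hbl⟩ := hL.exists_inv hax
    have hmem : 1 - ((b * a) * x - x * (b * a)) ∈ L := by
      rw [show 1 - ((b * a) * x - x * (b * a)) = l + x * (b * a) by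
        rw [← hbl]; noncomm_ring]
      exact L.add_mem hl (Ideal.mul_mem_left L x (Ideal.mul_mem_left L b ha))
    exact hnotunit _ hmem (by
      simpa using isUnit_algebraMap_sub (spectralRadius_commutator_eq_zero hx (b * a)) one_ne_zero)

theorem quasinilpotent_perturbation {A : Type*} [NormedRing A] [NormedAlgebra ℂ A]
    [CompleteSpace A] (a b : A)
    (h : ∀ (lam : ℂ) (q : A), spectralRadius ℂ q = 0 →
      spectralRadius ℂ (lam • (b - a) + q) ≤ (‖q‖₊ : ℝ≥0∞)) :
    (∀ q : A, spectralRadius ℂ q = 0 → spectralRadius ℂ ((b - a) + q) = 0) ∧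
      (Ideal.jacobson (⊥ : Ideal A) = ⊥ → a = b) := by
  have hadd (q : A) (hq : spectralRadius ℂ q = 0) : spectralRadius ℂ ((b - a) + q) = 0 := by
    simpa using spectralRadius_smul_add_eq_zero (fun t => h t q hq) hq 1
  refine ⟨hadd, fun hJ => ?_⟩
  have hrad := mem_jacobson_bot_of_forall_spectralRadius_add_eq_zero hadd
  rw [hJ, Ideal.mem_bot, sub_eq_zero] at hrad
  exact hrad.symm
end

section
/- Let A, B be complex unital Banach algebras with A semisimple, and let φ, ψ : A → B be maps satisfying: for all x, y ∈ A and λ ∈ ℂ, λx + y is invertible in A iff λφ(x) + ψ(y) is invertible in B. Then φ and ψ are both injective. -/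
theorem sum_two_units {A : Type*} [NormedRing A] [NormedAlgebra ℂ A] [CompleteSpace A] (x : A) :
    ∃ u v : A, IsUnit u ∧ IsUnit v ∧ x = u + v := by
  set lam : ℂ := ((‖x‖ + 1 : ℝ) : ℂ) with hlamdef
  have hlam : lam ≠ 0 := by
    simp only [lam, Ne, Complex.ofReal_eq_zero]
    positivity
  have halg : ∀ t : ℂ, t ≠ 0 → IsUnit (algebraMap ℂ A t) := fun t ht =>
    (Ne.isUnit ht).map (algebraMap ℂ A)
  have hnorm : ‖lam⁻¹ • x‖ < 1 := by
    rw [norm_smul, norm_inv]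
    rcases eq_or_ne x 0 with rfl | hx
    · simp
    · rw [inv_mul_lt_one₀]
      · simp only [lam, Complex.norm_real]
        rw [Real.norm_of_nonneg (by positivity)]
        linarith
      · simp only [lam, Complex.norm_real]
        rw [Real.norm_of_nonneg (by positivity)]
        positivity
  have hu : IsUnit ((1 : A) - lam⁻¹ • x) := (Units.oneSub _ hnorm).isUnit
  have hlu : IsUnit (lam • ((1:A) - lam⁻¹ • x)) := by
    rw [Algebra.smul_def]
    exact (halg lam hlam).mul hu
  have hv : IsUnit (lam • (1 : A)) := by
    rw [Algebra.smul_def, mul_one]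
    exact halg lam hlam
  refine ⟨-(lam • ((1:A) - lam⁻¹ • x)), lam • (1:A), hlu.neg, hv, ?_⟩
  rw [smul_sub, smul_inv_smul₀ hlam]
  abel

theorem key_lemma {A : Type*} [NormedRing A] [NormedAlgebra ℂ A] [CompleteSpace A]
    (hA : Ideal.jacobson (⊥ : Ideal A) = ⊥) (a b : A)
    (hab : ∀ c : A, IsUnit (a + c) ↔ IsUnit (b + c)) : a = b := by
  set z : A := b - a with hz
  -- Step 1: for every unit v, 1 + v*z is a unit
  have step1 : ∀ v : Aˣ, IsUnit (1 + (v : A) * z) := by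
    intro v
    have h1 : IsUnit (a + (((v⁻¹ : Aˣ) : A) - a)) := by
      rw [add_sub_cancel]
      exact (v⁻¹).isUnit
    have h2 : IsUnit (b + (((v⁻¹ : Aˣ) : A) - a)) := (hab _).mp h1
    have h3 : IsUnit ((v : A) * (b + (((v⁻¹ : Aˣ) : A) - a))) := v.isUnit.mul h2
    have h4 : (v : A) * (b + (((v⁻¹ : Aˣ) : A) - a)) = 1 + (v : A) * z := by
      rw [hz, mul_add, mul_sub, mul_sub, Units.mul_inv]
      abel
    rwa [h4] at h3
  -- Step 2: for every x, 1 + x*z is a unit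
  have step2 : ∀ x : A, IsUnit (1 + x * z) := by
    intro x
    obtain ⟨u, v, hu, hv, rfl⟩ := sum_two_units x
    obtain ⟨U, hU⟩ := hu
    obtain ⟨V, hV⟩ := hv
    obtain ⟨W, hW⟩ := step1 U
    have key : (W : A) * (1 + ((W⁻¹ * V : Aˣ) : A) * z) = 1 + ((U : A) + (V : A)) * z := by
      rw [mul_add, mul_one, ← mul_assoc, ← Units.val_mul, mul_inv_cancel_left, hW, add_mul]
      abel
    rw [← hU, ← hV, ← key]
    exact W.isUnit.mul (step1 (W⁻¹ * V))
  -- Step 3: z lies in every maximal (left) ideal, hence in the Jacobson radical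
  have hzmem : z ∈ Ideal.jacobson (⊥ : Ideal A) := by
    rw [Ideal.jacobson]
    rw [Ideal.mem_sInf]
    rintro M ⟨-, hM⟩
    by_contra hzM
    have hlt : M < M ⊔ Ideal.span {z} :=
      lt_of_le_of_ne le_sup_left (fun hEq => hzM (by
        rw [hEq]; exact Ideal.mem_sup_right (Ideal.subset_span rfl)))
    have hsup : M ⊔ Ideal.span {z} = ⊤ := hM.1.2 _ hlt
    have h1 : (1 : A) ∈ M ⊔ Ideal.span {z} := hsup ▸ Submodule.mem_top
    obtain ⟨m, hm, w, hw, hmw⟩ := Submodule.mem_sup.mp h1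
    obtain ⟨r, hr⟩ := Ideal.mem_span_singleton'.mp hw
    have : IsUnit m := by
      have : m = 1 + (-r) * z := by rw [← hmw, ← hr, neg_mul]; abel
      rw [this]
      exact step2 (-r)
    exact hM.ne_top (M.eq_top_of_isUnit_mem hm this)
  rw [hA] at hzmem
  have : z = 0 := hzmem
  exact (sub_eq_zero.mp this).symm

theorem pencil_preservers_injective {A B : Type*} [NormedRing A] [NormedAlgebra ℂ A]
    [CompleteSpace A] [NormedRing B] [NormedAlgebra ℂ B] [CompleteSpace B]
    (hA : Ideal.jacobson (⊥ : Ideal A) = ⊥) (φ ψ : A → B)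
    (h : ∀ (x y : A) (lam : ℂ), IsUnit (lam • x + y) ↔ IsUnit (lam • φ x + ψ y)) :
    Function.Injective φ ∧ Function.Injective ψ := by
  constructor
  · intro x1 x2 hx
    apply key_lemma hA
    intro c
    have h1 := h x1 c 1
    have h2 := h x2 c 1
    rw [one_smul, one_smul] at h1 h2
    rw [hx] at h1
    exact h1.trans h2.symm
  · intro y1 y2 hy
    apply key_lemma hA
    intro c
    have h1 := h c y1 1
    have h2 := h c y2 1
    rw [one_smul, one_smul] at h1 h2
    rw [hy] at h1
    rw [add_comm y1 c, add_comm y2 c]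
    exact h1.trans h2.symm
end

section
/- Let A, B be complex unital Banach algebras with A semisimple, and let φ, ψ : A → B be surjective maps satisfying: for all x, y ∈ A and λ ∈ ℂ, λx + y ∈ G(A) iff λφ(x) + ψ(y) ∈ G(B). Then B is semisimple. -/
/-!
Taking `lam = 0` shows that `ψ` maps units to units. In a ring where every element is a sum of
two units, which includes every Banach algebra, `x` lies in the Jacobson radical iff `x + u` is a
unit for every unit `u`. Hence, with `lam = 1`, if `φ x` lies in the radical of `B` then `x` lies
in the radical of `A`, so `x = 0`. The radical of `B` is therefore contained in `{φ 0}`, so it is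
zero.
-/

namespace Ideal

variable {R : Type*} [Ring R] {x : R}

theorem exists_mul_one_add_mul_eq_one_of_mem_jacobson_bot (hx : x ∈ jacobson (⊥ : Ideal R))
    (y : R) : ∃ z, z * (1 + y * x) = 1 := by
  obtain ⟨z, hz⟩ := mem_jacobson_iff.1 hx y
  refine ⟨z, ?_⟩
  rw [mem_bot] at hz
  rw [← sub_eq_zero, ← hz]
  noncomm_ring

theorem isUnit_one_add_of_mem_jacobson_bot (hx : x ∈ jacobson (⊥ : Ideal R)) :
    IsUnit (1 + x) := by
  obtain ⟨z, hz⟩ := exists_mul_one_add_mul_eq_one_of_mem_jacobson_bot hx 1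
  rw [one_mul] at hz
  -- `z = 1 - z * x` with `z * x` in the radical, so `z` also has a left inverse `w`.
  obtain ⟨w, hw⟩ := exists_mul_one_add_mul_eq_one_of_mem_jacobson_bot
    (neg_mem (mul_mem_left _ z hx)) 1
  have hz' : 1 + -(z * x) = z := by
    rw [← hz]
    noncomm_ring
  rw [one_mul, hz'] at hw
  obtain rfl : w = 1 + x := left_inv_eq_right_inv hw hz
  exact ⟨⟨1 + x, z, hw, hz⟩, rfl⟩

theorem isUnit_add_of_mem_jacobson_bot (hx : x ∈ jacobson (⊥ : Ideal R)) {u : R}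
    (hu : IsUnit u) : IsUnit (x + u) := by
  obtain ⟨u, rfl⟩ := hu
  have hux : x + u = u * (1 + ↑u⁻¹ * x) := by
    rw [mul_add, mul_one, ← mul_assoc, Units.mul_inv, one_mul, add_comm]
  exact hux ▸ u.isUnit.mul (isUnit_one_add_of_mem_jacobson_bot (mul_mem_left _ _ hx))

theorem mem_jacobson_bot_of_forall_isUnit_add
    (hR : ∀ y : R, ∃ u v, IsUnit u ∧ IsUnit v ∧ u + v = y)
    (hx : ∀ u, IsUnit u → IsUnit (x + u)) : x ∈ jacobson (⊥ : Ideal R) := by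
  have isUnit_one_add_unit_mul : ∀ u, IsUnit u → IsUnit (1 + u * x) := by
    rintro _ ⟨u, rfl⟩
    have hux : 1 + u * x = u * (x + ↑u⁻¹) := by
      rw [mul_add, Units.mul_inv, add_comm]
    exact hux ▸ u.isUnit.mul (hx _ u⁻¹.isUnit)
  have isUnit_one_add_mul : ∀ y, IsUnit (1 + y * x) := by
    intro y
    obtain ⟨u, v, hu, hv, rfl⟩ := hR y
    obtain ⟨a, ha⟩ := isUnit_one_add_unit_mul u hu
    have huv : 1 + (u + v) * x = a * (1 + (↑a⁻¹ * v) * x) := by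
      rw [mul_add, mul_one, mul_assoc, ← mul_assoc (a : R), Units.mul_inv, one_mul, ha]
      noncomm_ring
    exact huv ▸ a.isUnit.mul (isUnit_one_add_unit_mul _ (a⁻¹.isUnit.mul hv))
  refine mem_jacobson_iff.2 fun y => ?_
  obtain ⟨a, ha⟩ := isUnit_one_add_mul y
  refine ⟨↑a⁻¹, mem_bot.2 ?_⟩
  calc (↑a⁻¹ : R) * y * x + ↑a⁻¹ - 1 = ↑a⁻¹ * (1 + y * x) - 1 := by noncomm_ring
    _ = 0 := by rw [← ha, Units.inv_mul, sub_self]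

end Ideal

theorem NormedAlgebra.exists_isUnit_add_eq {𝕜 A : Type*} [NontriviallyNormedField 𝕜]
    [NormedRing A] [NormedAlgebra 𝕜 A] [CompleteSpace A] (a : A) :
    ∃ u v : A, IsUnit u ∧ IsUnit v ∧ u + v = a := by
  obtain ⟨k, hk⟩ := NormedField.exists_lt_norm 𝕜 (‖a‖ * ‖(1 : A)‖)
  have hk0 : k ≠ 0 := norm_pos_iff.1 ((by positivity : 0 ≤ ‖a‖ * ‖(1 : A)‖).trans_lt hk)
  refine ⟨algebraMap 𝕜 A k, -(algebraMap 𝕜 A k - a), hk0.isUnit.map _,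
    (spectrum.mem_resolventSet_of_norm_lt_mul hk).neg, by abel⟩

theorem codomain_semisimple_general {A B : Type*} [NormedRing A] [NormedAlgebra ℂ A]
    [CompleteSpace A] [NormedRing B] [NormedAlgebra ℂ B]
    (hA : Ideal.jacobson (⊥ : Ideal A) = ⊥) (φ ψ : A → B)
    (hφ : Function.Surjective φ)
    (h : ∀ (x y : A) (lam : ℂ), IsUnit (lam • x + y) ↔ IsUnit (lam • φ x + ψ y)) :
    Ideal.jacobson (⊥ : Ideal B) = ⊥ := by
  have hψ : ∀ u, IsUnit u → IsUnit (ψ u) := fun u hu => by simpa using (h 0 u 0).1 (by simpa)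
  have eq_zero : ∀ x, φ x ∈ Ideal.jacobson (⊥ : Ideal B) → x = 0 := by
    intro x hx
    have hxA : x ∈ Ideal.jacobson (⊥ : Ideal A) := by
      refine Ideal.mem_jacobson_bot_of_forall_isUnit_add
        (NormedAlgebra.exists_isUnit_add_eq (𝕜 := ℂ)) fun u hu => ?_
      have hB : IsUnit (φ x + ψ u) := Ideal.isUnit_add_of_mem_jacobson_bot hx (hψ u hu)
      simpa using (h x u 1).2 (by simpa using hB)
    rw [hA] at hxA
    exact Ideal.mem_bot.1 hxA
  have hφ0 : φ 0 = 0 := by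
    obtain ⟨x, hx⟩ := hφ 0
    rw [← hx, eq_zero x (hx ▸ zero_mem _)]
  refine eq_bot_iff.2 fun c hc => ?_
  obtain ⟨x, rfl⟩ := hφ c
  rw [Ideal.mem_bot, eq_zero x hc, hφ0]

theorem codomain_semisimple {A B : Type*} [NormedRing A] [NormedAlgebra ℂ A]
    [CompleteSpace A] [NormedRing B] [NormedAlgebra ℂ B] [CompleteSpace B]
    (hA : Ideal.jacobson (⊥ : Ideal A) = ⊥) (φ ψ : A → B)
    (hφ : Function.Surjective φ) (hψ : Function.Surjective ψ)
    (h : ∀ (x y : A) (lam : ℂ), IsUnit (lam • x + y) ↔ IsUnit (lam • φ x + ψ y)) :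
    Ideal.jacobson (⊥ : Ideal B) = ⊥ :=
  codomain_semisimple_general hA φ ψ hφ h
end

section
/- Let A, B be complex unital Banach algebras with A semisimple, and let φ, ψ : A → B be surjective maps satisfying: for all x, y ∈ A and λ ∈ ℂ, λx + y ∈ G(A) iff λφ(x) + ψ(y) ∈ G(B). Then φ(0) = 0 and ψ(0) = 0. -/
/-!
Call `s` *invariant* when `z + s` is invertible exactly when `z` is. Invariant elements form an
additive group stable under left multiplication by units. In a Banach algebra `1 + c • y` is
invertible for some small `c ≠ 0`, so every `y` is a difference of two units; hence `y * s` is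
invariant along with `s`, `1 + y * s` is invertible for all `y`, and `s` lies in the Jacobson
radical.

Taking `λ = 0` and `λ = 1` in the hypothesis shows that `φ 0` is invariant in `B`; if
`ψ y₁ = φ 0` and `ψ y₀ = 0`, then `y₁ - y₀` is invariant in the semisimple algebra `A`, so
`φ 0 = 0`. Taking `λ = c⁻¹`, `x` is invertible iff `φ x + c • ψ 0` is, for every `c ≠ 0`; as the
units of `B` are open this makes `ψ 0` invariant in `B`, and then a `φ`-preimage of `ψ 0` is
invariant in `A`, hence zero.
-/

section Ring

variable {R : Type*} [Ring R]

def IsUnitAddInvariant (s : R) : Prop := ∀ z, IsUnit (z + s) ↔ IsUnit z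

namespace IsUnitAddInvariant

variable {s t : R}

lemma add (hs : IsUnitAddInvariant s) (ht : IsUnitAddInvariant t) :
    IsUnitAddInvariant (s + t) := fun z => by
  rw [← add_assoc, ht, hs]

lemma neg (hs : IsUnitAddInvariant s) : IsUnitAddInvariant (-s) := fun z => by
  rw [← hs, neg_add_cancel_right]

lemma sub (hs : IsUnitAddInvariant s) (ht : IsUnitAddInvariant t) :
    IsUnitAddInvariant (s - t) :=
  sub_eq_add_neg s t ▸ hs.add ht.neg

lemma units_mul (hs : IsUnitAddInvariant s) (u : Rˣ) : IsUnitAddInvariant (u * s) := fun z => by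
  have : z + u * s = u * (↑u⁻¹ * z + s) := by rw [mul_add, u.mul_inv_cancel_left]
  rw [this, u.isUnit_units_mul, hs, u⁻¹.isUnit_units_mul]

lemma mem_jacobson_bot_of_forall_mul_left (h : ∀ y, IsUnitAddInvariant (y * s)) :
    s ∈ Ideal.jacobson (⊥ : Ideal R) := by
  refine Ideal.mem_jacobson_iff.mpr fun y => ?_
  obtain ⟨u, hu⟩ := (h y 1).mpr isUnit_one
  refine ⟨↑u⁻¹, ?_⟩
  rw [Ideal.mem_bot, mul_assoc, ← mul_add_one, add_comm, ← hu, u.inv_mul, sub_self]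

end IsUnitAddInvariant

lemma isUnitAddInvariant_sub {a b : R} (h : ∀ z, IsUnit (z + a) ↔ IsUnit (z + b)) :
    IsUnitAddInvariant (a - b) := fun z => by
  rw [show z + (a - b) = z - b + a by abel, h, sub_add_cancel]

lemma isUnitAddInvariant_of_isUnit_add_of_isUnit_sub {s : R}
    (hadd : ∀ d, IsUnit d → IsUnit (d + s)) (hsub : ∀ d, IsUnit d → IsUnit (d - s)) :
    IsUnitAddInvariant s := fun z =>
  ⟨fun hz => add_sub_cancel_right z s ▸ hsub _ hz, hadd z⟩

end Ring

section BanachAlgebra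

open Topology

variable {A : Type*} [NormedRing A] [CompleteSpace A]

lemma exists_ne_zero_isUnit_add_smul {𝕜 : Type*} [NontriviallyNormedField 𝕜] [NormedAlgebra 𝕜 A]
    {d : A} (hd : IsUnit d) (b : A) : ∃ c : 𝕜, c ≠ 0 ∧ IsUnit (d + c • b) := by
  have hnhds : ∀ᶠ c in 𝓝 (0 : 𝕜), IsUnit (d + c • b) :=
    (Continuous.tendsto' (by fun_prop) 0 d (by simp)).eventually (Units.isOpen.eventually_mem hd)
  exact (eventually_mem_nhdsWithin.and (nhdsWithin_le_nhds hnhds) : ∀ᶠ c in 𝓝[≠] (0 : 𝕜), _).exists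

lemma exists_units_sub_eq (𝕜 : Type*) [NontriviallyNormedField 𝕜] [NormedAlgebra 𝕜 A] (y : A) :
    ∃ u v : Aˣ, (u - v : A) = y := by
  obtain ⟨c, hc, u, hu⟩ := exists_ne_zero_isUnit_add_smul (𝕜 := 𝕜) isUnit_one y
  let w : Aˣ := Units.map (algebraMap 𝕜 A).toMonoidHom (Units.mk0 c hc)⁻¹
  refine ⟨w * u, w, ?_⟩
  simp [w, hu, mul_add, ← Algebra.smul_def, smul_smul, hc]

lemma IsUnitAddInvariant.mem_jacobson_bot (𝕜 : Type*) [NontriviallyNormedField 𝕜]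
    [NormedAlgebra 𝕜 A] {s : A} (hs : IsUnitAddInvariant s) :
    s ∈ Ideal.jacobson (⊥ : Ideal A) :=
  IsUnitAddInvariant.mem_jacobson_bot_of_forall_mul_left fun y => by
    obtain ⟨u, v, rfl⟩ := exists_units_sub_eq 𝕜 y
    rw [sub_mul]
    exact (hs.units_mul u).sub (hs.units_mul v)

lemma isUnitAddInvariant_of_isUnit_add_smul_imp {𝕜 : Type*} [NontriviallyNormedField 𝕜]
    [NormedAlgebra 𝕜 A] {b : A}
    (hb : ∀ d {c c' : 𝕜}, c ≠ 0 → c' ≠ 0 → IsUnit (d + c • b) → IsUnit (d + c' • b)) :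
    IsUnitAddInvariant b := by
  have h_unit_add : ∀ d, IsUnit d → ∀ {c' : 𝕜}, c' ≠ 0 → IsUnit (d + c' • b) := fun d hd c' hc' =>
    have ⟨c, hc, hu⟩ := exists_ne_zero_isUnit_add_smul (𝕜 := 𝕜) hd b
    hb d hc hc' hu
  refine isUnitAddInvariant_of_isUnit_add_of_isUnit_sub (fun d hd => ?_) fun d hd => ?_
  · simpa using h_unit_add d hd one_ne_zero
  · simpa [sub_eq_add_neg] using h_unit_add d hd (neg_ne_zero.mpr one_ne_zero)

end BanachAlgebra

theorem preservers_map_zero_to_zero {A B : Type*} [NormedRing A] [NormedAlgebra ℂ A]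
    [CompleteSpace A] [NormedRing B] [NormedAlgebra ℂ B] [CompleteSpace B]
    (hA : Ideal.jacobson (⊥ : Ideal A) = ⊥) (φ ψ : A → B)
    (hφ : Function.Surjective φ) (hψ : Function.Surjective ψ)
    (h : ∀ (x y : A) (lam : ℂ), IsUnit (lam • x + y) ↔ IsUnit (lam • φ x + ψ y)) :
    φ 0 = 0 ∧ ψ 0 = 0 := by
  have eq_zero : ∀ {s : A}, IsUnitAddInvariant s → s = 0 := fun hs =>
    (Ideal.mem_bot).mp (hA ▸ hs.mem_jacobson_bot ℂ)
  have h_add : ∀ x y, IsUnit (x + y) ↔ IsUnit (φ x + ψ y) := fun x y => by simpa using h x y 1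
  have hψ_isUnit : ∀ y, IsUnit (ψ y) ↔ IsUnit y := fun y => by simpa using (h 0 y 0).symm
  have hφ_zero : φ 0 = 0 := by
    have hφ0_invariant : IsUnitAddInvariant (φ 0) := fun c => by
      obtain ⟨y, rfl⟩ := hψ c
      rw [add_comm, ← h_add, zero_add, hψ_isUnit]
    obtain ⟨y₁, hy₁⟩ := hψ (φ 0)
    obtain ⟨y₀, hy₀⟩ := hψ 0
    have hy : IsUnitAddInvariant (y₁ - y₀) :=
      isUnitAddInvariant_sub fun z => by rw [h_add, h_add, hy₁, hy₀, hφ0_invariant, add_zero]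
    rw [← hy₁, sub_eq_zero.mp (eq_zero hy), hy₀]
  -- `h x 0 c⁻¹`, rescaled by `c`
  have h_smul : ∀ x {c : ℂ}, c ≠ 0 → (IsUnit (φ x + c • ψ 0) ↔ IsUnit x) := fun x c hc => by
    rw [← isUnit_smul_iff (Units.mk0 c⁻¹ (inv_ne_zero hc)), Units.smul_mk0, smul_add, smul_smul,
      inv_mul_cancel₀ hc, one_smul, ← h, add_zero, ← Units.smul_mk0 (inv_ne_zero hc),
      isUnit_smul_iff]
  have hψ0_invariant : IsUnitAddInvariant (ψ 0) :=
    isUnitAddInvariant_of_isUnit_add_smul_imp (𝕜 := ℂ) fun d c c' hc hc' hu => by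
      obtain ⟨x, rfl⟩ := hφ d
      exact (h_smul x hc').mpr ((h_smul x hc).mp hu)
  obtain ⟨x₁, hx₁⟩ := hφ (ψ 0)
  have hx₁_zero : x₁ = 0 :=
    eq_zero fun z => by rw [add_comm, h_add, hx₁, add_comm, hψ0_invariant, hψ_isUnit]
  exact ⟨hφ_zero, by rw [← hx₁, hx₁_zero, hφ_zero]⟩
end

section
/- Let A, B be complex unital Banach algebras with A semisimple, and suppose surjective maps φ, ψ : A → B satisfy: λx + y ∈ G(A) iff λφ(x) + ψ(y) ∈ G(B) for all x, y ∈ A, λ ∈ ℂ. Then φ and ψ are homogeneous: φ(λx) = λφ(x) and ψ(λx) = λψ(x) for all x ∈ A, λ ∈ ℂ. -/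
/-- Scalar multiplication by a nonzero complex number preserves invertibility. -/
lemma aux_smul_isUnit {R : Type*} [Ring R] [Algebra ℂ R] {μ : ℂ} (hμ : μ ≠ 0) (b : R) :
    IsUnit (μ • b) ↔ IsUnit b := by
  have hu : IsUnit (algebraMap ℂ R μ) := (hμ.isUnit).map (algebraMap ℂ R)
  rw [Algebra.smul_def, ← hu.unit_spec, Units.isUnit_units_mul]

/-- If translation by `d` preserves invertibility, so does translation by `μ • d`. -/
lemma aux_P {R : Type*} [Ring R] [Algebra ℂ R] {d : R}
    (hd : ∀ w : R, IsUnit w ↔ IsUnit (w + d)) (μ : ℂ) (w : R) :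
    IsUnit (w + μ • d) ↔ IsUnit w := by
  rcases eq_or_ne μ 0 with rfl | hμ
  · simp
  · have e : w + μ • d = μ • (μ⁻¹ • w + d) := by
      rw [smul_add, smul_smul, mul_inv_cancel₀ hμ, one_smul]
    rw [e, aux_smul_isUnit hμ, ← hd, aux_smul_isUnit (inv_ne_zero hμ)]

/-- Zemánek-type elementary step: if translation by `d` preserves invertibility in a
complex Banach algebra, then `1 - r * d` is invertible for every `r`. -/
lemma aux_one_sub {R : Type*} [NormedRing R] [NormedAlgebra ℂ R] [CompleteSpace R] {d : R}
    (hd : ∀ w : R, IsUnit w ↔ IsUnit (w + d)) (r : R) : IsUnit (1 - r * d) := by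
  set μ : ℂ := ((‖r‖ + 1 : ℝ) : ℂ) with hμdef
  have hpos : (0:ℝ) < ‖r‖ + 1 := by positivity
  have hμ : μ ≠ 0 := by
    simp only [hμdef, ne_eq, Complex.ofReal_eq_zero]
    exact ne_of_gt hpos
  have hnormμ : ‖μ‖ = ‖r‖ + 1 := by
    rw [hμdef, Complex.norm_real, Real.norm_of_nonneg hpos.le]
  have hlt : ‖μ⁻¹ • r‖ < 1 := by
    rw [norm_smul, norm_inv, hnormμ]
    rw [inv_mul_lt_iff₀ hpos]
    linarith
  have h1 : IsUnit ((1 : R) - μ⁻¹ • r) := (Units.oneSub _ hlt).isUnit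
  have h2 : IsUnit (μ • (1:R) - r) := by
    have h2' := (aux_smul_isUnit hμ _).mpr h1
    rwa [smul_sub, smul_smul, mul_inv_cancel₀ hμ, one_smul] at h2'
  obtain ⟨u, hu⟩ := h2
  have h3 : IsUnit (((u⁻¹ : Rˣ) : R) + d) := (hd _).mp (u⁻¹ : Rˣ).isUnit
  have h4 : IsUnit ((u : R) * (((u⁻¹ : Rˣ) : R) + d)) := u.isUnit.mul h3
  have e : (u : R) * (((u⁻¹ : Rˣ) : R) + d) = (1 - r * d) + μ • d := by
    rw [mul_add, Units.mul_inv, hu, sub_mul, smul_mul_assoc, one_mul]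
    abel
  rw [e] at h4
  exact (aux_P hd μ _).mp h4

/-- In a semisimple complex Banach algebra, if translation by `d` preserves invertibility,
then `d = 0`. -/
lemma aux_rad_zero {R : Type*} [NormedRing R] [NormedAlgebra ℂ R] [CompleteSpace R]
    (hR : Ideal.jacobson (⊥ : Ideal R) = ⊥) {d : R}
    (hd : ∀ w : R, IsUnit w ↔ IsUnit (w + d)) : d = 0 := by
  have hmem : d ∈ Ideal.jacobson (⊥ : Ideal R) := by
    rw [Ideal.jacobson]
    refine Submodule.mem_sInf.mpr ?_
    rintro M ⟨-, hMmax⟩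
    by_contra hdM
    have hdJ : d ∈ M ⊔ Ideal.span {d} :=
      Submodule.mem_sup_right (Ideal.subset_span (Set.mem_singleton d))
    have hlt : M < M ⊔ Ideal.span {d} :=
      lt_of_le_of_ne le_sup_left (fun he => hdM (he ▸ hdJ))
    have htop : M ⊔ Ideal.span {d} = ⊤ := hMmax.out.2 _ hlt
    have h1 : (1:R) ∈ M ⊔ Ideal.span {d} := htop ▸ Submodule.mem_top
    rcases Submodule.mem_sup.mp h1 with ⟨m, hm, z, hz, hmz⟩
    rcases Submodule.mem_span_singleton.mp hz with ⟨r, rfl⟩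
    have hmeq : m = 1 - r * d := by
      rw [smul_eq_mul] at hmz
      rw [← hmz]; abel
    exact hMmax.ne_top (Ideal.eq_top_of_isUnit_mem M hm (hmeq ▸ aux_one_sub hd r))
  rw [hR] at hmem
  simpa using hmem

theorem preservers_homogeneous {A B : Type*} [NormedRing A] [NormedAlgebra ℂ A]
    [CompleteSpace A] [NormedRing B] [NormedAlgebra ℂ B] [CompleteSpace B]
    (hA : Ideal.jacobson (⊥ : Ideal A) = ⊥) (φ ψ : A → B)
    (hφ : Function.Surjective φ) (hψ : Function.Surjective ψ)
    (h : ∀ (x y : A) (lam : ℂ), IsUnit (lam • x + y) ↔ IsUnit (lam • φ x + ψ y)) :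
    (∀ (lam : ℂ) (x : A), φ (lam • x) = lam • φ x) ∧
      (∀ (lam : ℂ) (x : A), ψ (lam • x) = lam • ψ x) := by
  -- The λ = 1 case of the hypothesis.
  have h1 : ∀ x y : A, IsUnit (x + y) ↔ IsUnit (φ x + ψ y) := by
    intro x y
    simpa using h x y 1
  -- Key cancellation in A via semisimplicity.
  have key : ∀ y₁ y₂ : A, (∀ z : A, IsUnit (z + y₁) ↔ IsUnit (z + y₂)) → y₁ = y₂ := by
    intro y₁ y₂ hy
    have hd : ∀ w : A, IsUnit w ↔ IsUnit (w + (y₁ - y₂)) := by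
      intro w
      have := hy (w - y₂)
      have e1 : w - y₂ + y₂ = w := by abel
      have e2 : w - y₂ + y₁ = w + (y₁ - y₂) := by abel
      rw [e1, e2] at this
      exact this.symm
    exact sub_eq_zero.mp (aux_rad_zero hA hd)
  -- separation via ψ-translates
  have sep : ∀ b₁ b₂ : B, (∀ y : A, IsUnit (b₁ + ψ y) ↔ IsUnit (b₂ + ψ y)) → b₁ = b₂ := by
    intro b₁ b₂ hb
    obtain ⟨a₁, rfl⟩ := hφ b₁
    obtain ⟨a₂, rfl⟩ := hφ b₂
    have : a₁ = a₂ := by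
      refine key a₁ a₂ fun z => ?_
      have e1 : IsUnit (z + a₁) ↔ IsUnit (a₁ + z) := by rw [add_comm]
      have e2 : IsUnit (z + a₂) ↔ IsUnit (a₂ + z) := by rw [add_comm]
      rw [e1, e2, h1 a₁ z, h1 a₂ z]
      exact hb z
    rw [this]
  -- separation via φ-translates
  have sep' : ∀ b₁ b₂ : B, (∀ z : A, IsUnit (φ z + b₁) ↔ IsUnit (φ z + b₂)) → b₁ = b₂ := by
    intro b₁ b₂ hb
    obtain ⟨y₁, rfl⟩ := hψ b₁
    obtain ⟨y₂, rfl⟩ := hψ b₂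
    have : y₁ = y₂ := by
      refine key y₁ y₂ fun z => ?_
      rw [h1 z y₁, h1 z y₂]
      exact hb z
    rw [this]
  have hφhom : ∀ (lam : ℂ) (x : A), φ (lam • x) = lam • φ x := by
    intro lam x
    refine sep _ _ fun y => ?_
    have e1 : IsUnit (φ (lam • x) + ψ y) ↔ IsUnit (lam • x + y) := (h1 _ y).symm
    have e2 : IsUnit (lam • φ x + ψ y) ↔ IsUnit (lam • x + y) := (h x y lam).symm
    exact e1.trans e2.symm
  -- ψ 0 = 0
  have hψ0 : ψ 0 = 0 := by
    obtain ⟨y₀, hy₀⟩ := hψ 0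
    have k : ∀ z : A, IsUnit (z + (2:ℂ) • y₀) ↔ IsUnit (z + y₀) := by
      intro z
      have hμ : ((2:ℂ))⁻¹ ≠ 0 := by norm_num
      have hx := h z y₀ ((2:ℂ))⁻¹
      rw [hy₀, add_zero, aux_smul_isUnit hμ] at hx
      have hx' := h1 z y₀
      rw [hy₀, add_zero] at hx'
      -- hx : IsUnit ((2:ℂ)⁻¹ • z + y₀) ↔ IsUnit (φ z); hx' : IsUnit (z + y₀) ↔ IsUnit (φ z)
      have e : z + (2:ℂ) • y₀ = (2:ℂ) • (((2:ℂ))⁻¹ • z + y₀) := by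
        rw [smul_add, smul_smul]
        norm_num
      rw [e, aux_smul_isUnit (by norm_num : (2:ℂ) ≠ 0)]
      exact hx.trans hx'.symm
    have h2y : (2:ℂ) • y₀ = y₀ := key _ _ k
    have : y₀ = 0 := by
      have : (2:ℂ) • y₀ - y₀ = 0 := by rw [h2y]; abel
      have e : (2:ℂ) • y₀ - y₀ = y₀ := by
        have : (2:ℂ) • y₀ = y₀ + y₀ := by
          rw [show (2:ℂ) = 1 + 1 by norm_num, add_smul, one_smul]
        rw [this]; abel
      rwa [e] at this
    rw [← hy₀, this]
  have hψhom : ∀ (lam : ℂ) (x : A), ψ (lam • x) = lam • ψ x := by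
    intro lam x
    rcases eq_or_ne lam 0 with rfl | hlam
    · simp [hψ0]
    refine sep' _ _ fun z => ?_
    have e1 : IsUnit (φ z + ψ (lam • x)) ↔ IsUnit (z + lam • x) := (h1 z _).symm
    have e2 : IsUnit (φ z + lam • ψ x) ↔ IsUnit (z + lam • x) := by
      have ha : φ z + lam • ψ x = lam • (lam⁻¹ • φ z + ψ x) := by
        rw [smul_add, smul_smul, mul_inv_cancel₀ hlam, one_smul]
      have hb' : z + lam • x = lam • (lam⁻¹ • z + x) := by
        rw [smul_add, smul_smul, mul_inv_cancel₀ hlam, one_smul]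
      rw [ha, hb', aux_smul_isUnit hlam, aux_smul_isUnit hlam]
      exact (h z x lam⁻¹).symm
    exact e1.trans e2.symm
  exact ⟨hφhom, hψhom⟩
end

section
/- Let A be a semisimple complex unital Banach algebra and x ∈ A. If tr(xa) = 0 for each a ∈ soc(A), then x·soc(A) = {0}. Moreover, if in addition x ∈ soc(A), then x = 0. -/
open scoped ENNReal Classical

/-- The spectral rank of an element of a complex Banach algebra:
`rank a = sup_{x ∈ A} #(σ(xa) \ {0})`. -/
noncomputable def sRank {A : Type*} [NormedRing A] [NormedAlgebra ℂ A] (a : A) : ℕ∞ :=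
  ⨆ x : A, ((spectrum ℂ (x * a)) \ {0}).encard

/-- The socle of a semisimple Banach algebra: the set of finite (spectral) rank elements. -/
def socle (A : Type*) [NormedRing A] [NormedAlgebra ℂ A] : Set A :=
  {a : A | sRank a ≠ ⊤}

/-- The trace of an element of rank at most one: its unique nonzero spectral value,
or `0` if the spectrum is `{0}`. -/

noncomputable def trOne {A : Type*} [NormedRing A] [NormedAlgebra ℂ A] (a : A) : ℂ :=
  if h : ∃ μ : ℂ, (spectrum ℂ a) \ {0} = {μ} then h.choose else 0

/-!
An element of rank at most one has at most one nonzero spectral value, its trace, so the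
hypothesis makes `x c y` quasinilpotent for every `c` of rank at most one, and semisimplicity
gives `x c = 0`. Now let `u` be of finite rank with
`u c = 0` for all such `c`. Then `u` has rank at most one: otherwise some `u z` has two distinct
nonzero spectral values, whose spectral idempotents `f₁, f₂ ∈ u A` are orthogonal, so that
`rank f₁ < rank (f₁ + f₂) ≤ rank u`; by induction `f₁`, which also kills the elements of rank at
most one, has rank at most one, whence `f₁ = f₁² = 0`. The same applies to every `u y`, so
`(u y)² = 0` and semisimplicity gives `u = 0`; take `u = x a` with `a` in the socle, or `u = x`.

The spectral idempotents are built without contour integrals. In the closed subalgebra generated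
by `b`, which is commutative and, as `σ(b)` is finite, has the same spectrum as `b`, a Lagrange
polynomial gives `e ∈ b A` whose Gelfand transform is the indicator of `{μ}`. Then
`(1 - 2e)² = 1 + v` with `v` quasinilpotent; dividing `1 - 2e` by the binomial-series square
root of `1 + v` gives `g` with `g² = 1`, and `(1 - g) / 2` is the idempotent.
-/

section Spectrum

variable {𝕜 A : Type*} [Field 𝕜] [Ring A] [Algebra 𝕜 A]

lemma spectrum_sdiff_zero_subset_add {a b : A} (hab : a * b = 0) (hba : b * a = 0) :
    spectrum 𝕜 a \ {0} ⊆ spectrum 𝕜 (a + b) := by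
  rintro μ ⟨ha, hμ⟩
  rw [spectrum.mem_iff] at ha ⊢
  intro hunit
  have hcomm : Commute (algebraMap 𝕜 A μ - a) (algebraMap 𝕜 A μ - b) := by
    simp only [Commute, SemiconjBy, sub_mul, mul_sub, hab, hba, Algebra.commutes, sub_zero]
    abel
  have hprod : (algebraMap 𝕜 A μ - a) * (algebraMap 𝕜 A μ - b)
      = algebraMap 𝕜 A μ * (algebraMap 𝕜 A μ - (a + b)) := by
    rw [sub_mul, mul_sub, mul_sub, hab, ← Algebra.commutes μ a]
    noncomm_ring
  have hμ' : IsUnit (algebraMap 𝕜 A μ) := (isUnit_iff_ne_zero.mpr (by simpa using hμ)).map _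
  exact ha (hcomm.isUnit_mul_iff.mp (hprod ▸ hμ'.mul hunit)).1

lemma IsIdempotentElem.mem_spectrum_smul {q : A} (hq : IsIdempotentElem q) (hq0 : q ≠ 0)
    (t : 𝕜) : t ∈ spectrum 𝕜 (t • q) := by
  intro hu
  apply hq0
  have hkill : (algebraMap 𝕜 A t - t • q) * q = 0 := by
    rw [Algebra.algebraMap_eq_smul_one, ← smul_sub, smul_mul_assoc, sub_mul, one_mul, hq.eq,
      sub_self, smul_zero]
  calc q = ↑hu.unit⁻¹ * ((algebraMap 𝕜 A t - t • q) * q) := by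
        rw [← mul_assoc, hu.val_inv_mul, one_mul]
    _ = 0 := by rw [hkill, mul_zero]

lemma IsIdempotentElem.one_mem_spectrum {q : A} (hq : IsIdempotentElem q) (hq0 : q ≠ 0) :
    (1 : 𝕜) ∈ spectrum 𝕜 q := by
  simpa using hq.mem_spectrum_smul hq0 (1 : 𝕜)

lemma IsNilpotent.spectrum_subset_zero {a : A} (ha : IsNilpotent a) : spectrum 𝕜 a ⊆ {0} := by
  intro μ hμ
  by_contra hμ0
  rw [spectrum.mem_iff, sub_eq_add_neg] at hμ
  exact hμ (ha.neg.isUnit_add_left_of_commute ((isUnit_iff_ne_zero.mpr hμ0).map (algebraMap 𝕜 A))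
    (Algebra.commute_algebraMap_left μ a).neg_right.symm)

lemma eq_zero_of_forall_spectrum_mul_subset_zero (hA : Ideal.jacobson (⊥ : Ideal A) = ⊥) {u : A}
    (hu : ∀ y, spectrum 𝕜 (u * y) ⊆ {0}) : u = 0 := by
  suffices u ∈ Ideal.jacobson (⊥ : Ideal A) by simpa [hA] using this
  refine Ideal.mem_jacobson_iff.mpr fun y => ?_
  have hy : (-1 : 𝕜) ∉ spectrum 𝕜 (y * u) := fun h => by
    have h' : (-1 : 𝕜) ∈ spectrum 𝕜 (u * y) \ {0} :=
      spectrum.nonzero_mul_comm (𝕜 := 𝕜) y u ▸ ⟨h, by simp⟩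
    simpa using hu y h'.1
  rw [spectrum.notMem_iff, map_neg, map_one, ← neg_add', IsUnit.neg_iff] at hy
  obtain ⟨z, hz⟩ := hy.exists_left_inv
  refine ⟨z, (Submodule.mem_bot A).mpr ?_⟩
  rw [mul_assoc, add_comm, ← mul_one_add, hz, sub_self]

end Spectrum

section SquareRoot

lemma norm_choose_half_le_one (n : ℕ) : ‖Ring.choose (1 / 2 : ℂ) n‖ ≤ 1 := by
  induction n with
  | zero => simp
  | succ k ih =>
    have hrec : ((k : ℂ) + 1) * Ring.choose (1 / 2 : ℂ) (k + 1)
        = Ring.choose (1 / 2 : ℂ) k * (1 / 2 - k) := by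
      have := Ring.choose_smul_choose (1 / 2 : ℂ) (Nat.le_succ k)
      simpa [Ring.choose_one_right, nsmul_eq_mul] using this
    have hk : ‖(1 / 2 : ℂ) - k‖ ≤ ‖(k : ℂ) + 1‖ := by
      have h1 : ‖(1 / 2 : ℂ) - k‖ ≤ 1 / 2 + k := by
        simpa using norm_sub_le (1 / 2 : ℂ) (k : ℂ)
      have h2 : ‖(k : ℂ) + 1‖ = k + 1 := by norm_cast
      linarith
    have hpos : 0 < ‖(k : ℂ) + 1‖ := by norm_cast; positivity
    have := congrArg norm hrec
    rw [norm_mul, norm_mul] at this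
    nlinarith [norm_nonneg (Ring.choose (1 / 2 : ℂ) k),
      norm_nonneg (Ring.choose (1 / 2 : ℂ) (k + 1))]

lemma sum_antidiagonal_choose_half (n : ℕ) :
    ∑ ij ∈ Finset.HasAntidiagonal.antidiagonal n,
      Ring.choose (1 / 2 : ℂ) ij.1 * Ring.choose (1 / 2 : ℂ) ij.2 = Nat.choose 1 n := by
  rw [← Ring.add_choose_eq n (Commute.refl _), add_halves, ← Nat.cast_one, Ring.choose_natCast]

variable {A : Type*} [NormedRing A] [NormedAlgebra ℂ A] [CompleteSpace A]

lemma eventually_norm_pow_le_of_spectrum_subset_zero {v : A} (hv : spectrum ℂ v ⊆ {0}) :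
    ∀ᶠ n in Filter.atTop, ‖v ^ n‖ ≤ (2⁻¹ : ℝ) ^ n := by
  have hρ : spectralRadius ℂ v = 0 :=
    le_antisymm (iSup₂_le fun k hk => by simp [Set.mem_singleton_iff.mp (hv hk)]) zero_le
  have := spectrum.pow_norm_pow_one_div_tendsto_nhds_spectralRadius v
  rw [hρ] at this
  filter_upwards [this.eventually_lt_const (by norm_num : (0 : ℝ≥0∞) < ENNReal.ofReal 2⁻¹),
    Filter.eventually_ge_atTop 1] with n hn hn1
  rw [ENNReal.ofReal_lt_ofReal_iff (by norm_num), one_div] at hn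
  calc ‖v ^ n‖ = (‖v ^ n‖ ^ (n⁻¹ : ℝ)) ^ n :=
        (Real.rpow_inv_natCast_pow (norm_nonneg _) (by omega)).symm
    _ ≤ (2⁻¹ : ℝ) ^ n := pow_le_pow_left₀ (by positivity) hn.le n

lemma summable_norm_smul_pow {v : A} (hv : spectrum ℂ v ⊆ {0}) {c : ℕ → ℂ}
    (hc : ∀ n, ‖c n‖ ≤ 1) : Summable fun n => ‖c n • v ^ n‖ := by
  refine .of_norm_bounded_eventually
    (summable_geometric_of_lt_one (by norm_num) (by norm_num : (2⁻¹ : ℝ) < 1)) ?_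
  rw [Nat.cofinite_eq_atTop]
  filter_upwards [eventually_norm_pow_le_of_spectrum_subset_zero hv] with n hn
  rw [norm_norm]
  exact (norm_smul_le _ _).trans (by nlinarith [hc n, norm_nonneg (c n), norm_nonneg (v ^ n)])

lemma exists_mul_self_eq_one_add {v : A} (hv : spectrum ℂ v ⊆ {0}) :
    ∃ m : A, (1 + v * m) * (1 + v * m) = 1 + v := by
  set c : ℕ → ℂ := fun n => Ring.choose (1 / 2 : ℂ) n
  have hsum := summable_norm_smul_pow hv (c := c) norm_choose_half_le_one
  have hsum' := summable_norm_smul_pow hv (c := fun n => c (n + 1)) fun _ =>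
    norm_choose_half_le_one _
  refine ⟨∑' n, c (n + 1) • v ^ n, ?_⟩
  have hs : ∑' n, c n • v ^ n = 1 + v * ∑' n, c (n + 1) • v ^ n := by
    rw [hsum.of_norm.tsum_eq_zero_add, ← hsum'.of_norm.tsum_mul_left]
    simp [c, pow_succ']
  rw [← hs, tsum_mul_tsum_eq_tsum_sum_antidiagonal_of_summable_norm hsum hsum]
  have hterm : ∀ n, ∑ kl ∈ Finset.HasAntidiagonal.antidiagonal n,
      c kl.1 • v ^ kl.1 * c kl.2 • v ^ kl.2 = (Nat.choose 1 n : ℂ) • v ^ n := fun n => by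
    rw [← sum_antidiagonal_choose_half, Finset.sum_smul]
    refine Finset.sum_congr rfl fun kl hkl => ?_
    rw [smul_mul_smul_comm, ← pow_add, Finset.HasAntidiagonal.mem_antidiagonal.mp hkl]
  rw [tsum_congr hterm, tsum_eq_sum (s := Finset.range 2) fun n hn => by
    rw [Nat.choose_eq_zero_of_lt (by simpa using hn), Nat.cast_zero, zero_smul]]
  simp [Finset.sum_range_succ]

end SquareRoot

section CommBanach

open WeakDual Polynomial

variable {B : Type*} [NormedCommRing B] [NormedAlgebra ℂ B] [CompleteSpace B]

lemma spectrum_subset_zero_of_forall_character {v : B}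
    (hv : ∀ φ : characterSpace ℂ B, φ v = 0) : spectrum ℂ v ⊆ {0} := by
  intro z hz
  obtain ⟨φ, rfl⟩ := CharacterSpace.mem_spectrum_iff_exists.mp hz
  exact hv φ

lemma IsIdempotentElem.eq_zero_of_forall_character {q : B} (hq : IsIdempotentElem q)
    (h : ∀ φ : characterSpace ℂ B, φ q = 0) : q = 0 := by
  by_contra hq0
  obtain ⟨φ, hφ⟩ := CharacterSpace.mem_spectrum_iff_exists.mp (hq.one_mem_spectrum (𝕜 := ℂ) hq0)
  exact one_ne_zero (hφ.symm.trans (h φ))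

lemma exists_isIdempotentElem_dvd_character_eq {e : B}
    (he : ∀ φ : characterSpace ℂ B, IsIdempotentElem (φ e)) :
    ∃ q : B, IsIdempotentElem q ∧ e ∣ q ∧ ∀ φ : characterSpace ℂ B, φ q = φ e := by
  set v : B := 4 * (e * e - e)
  have hv : spectrum ℂ v ⊆ {0} := spectrum_subset_zero_of_forall_character fun φ => by
    simp [v, (he φ).eq]
  obtain ⟨m, hm⟩ := exists_mul_self_eq_one_add hv
  set s : B := 1 + v * m
  have hv1 : IsUnit (1 + v) := by
    have h := spectrum.notMem_iff.mp fun h => (by norm_num : (-1 : ℂ) ≠ 0) (hv h)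
    rwa [map_neg, map_one, ← neg_add', IsUnit.neg_iff] at h
  have hs : IsUnit s := isUnit_of_mul_isUnit_left (hm ▸ hv1 : IsUnit (s * s))
  set u : B := (1 - 2 * e) * ↑hs.unit⁻¹
  have hu : u * u = 1 := by
    have h1 : (1 - 2 * e) * (1 - 2 * e) = s * s := by rw [hm]; ring
    calc u * u = ((1 - 2 * e) * (1 - 2 * e)) * (↑hs.unit⁻¹ * ↑hs.unit⁻¹) := by ring
      _ = 1 := by rw [h1, mul_mul_mul_comm, hs.mul_val_inv, one_mul]
  have hφs : ∀ φ : characterSpace ℂ B, φ ↑hs.unit⁻¹ = 1 := fun φ => by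
    simp [s, v, (he φ).eq]
  set q : B := (2⁻¹ : ℂ) • (1 - u)
  have hq : IsIdempotentElem q := by
    have h2 : (1 - u) * (1 - u) = (2 : ℂ) • (1 - u) := by
      rw [two_smul]
      linear_combination hu
    rw [IsIdempotentElem, smul_mul_smul_comm, h2, smul_smul]
    norm_num [q]
  have hφq : ∀ φ : characterSpace ℂ B, φ q = φ e := fun φ => by
    simp [q, u, hφs φ, map_ofNat]
  -- `q (1 - e)` is quasinilpotent, and `q (1 - q (1 - e)) = q e`
  set w : B := q * (1 - e)
  have hw : spectrum ℂ w ⊆ {0} := spectrum_subset_zero_of_forall_character fun φ => by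
    simp only [w, map_mul, map_sub, hφq φ, mul_sub, mul_one, (he φ).eq, sub_self]
  have hw1 : IsUnit (1 - w) := by
    have h := spectrum.notMem_iff.mp fun h => one_ne_zero (hw h)
    rwa [map_one] at h
  refine ⟨q, hq, ⟨q * ↑hw1.unit⁻¹, ?_⟩, hφq⟩
  have hqe : q * e = q * (1 - w) := by simp only [w, mul_sub, ← mul_assoc, hq.eq]; ring
  calc q = q * (1 - w) * ↑hw1.unit⁻¹ := by rw [mul_assoc, hw1.mul_val_inv, mul_one]
    _ = e * (q * ↑hw1.unit⁻¹) := by rw [← hqe]; ring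

lemma exists_isIdempotentElem_dvd_character_eq_ite (β : B) (hβ : (spectrum ℂ β).Finite) {μ : ℂ}
    (hμ : μ ≠ 0) : ∃ q : B, IsIdempotentElem q ∧ β ∣ q ∧
      ∀ φ : characterSpace ℂ B, φ q = if φ β = μ then 1 else 0 := by
  classical
  set T : Finset ℂ := insert 0 hβ.toFinset
  set P : ℂ[X] := Lagrange.interpolate T id fun t => if t = μ then 1 else 0
  have hP : ∀ t ∈ T, P.eval t = if t = μ then 1 else 0 := fun t ht =>
    Lagrange.eval_interpolate_at_node _ (Set.injOn_id _) ht
  obtain ⟨Q, hQ⟩ : X ∣ P := X_dvd_iff.mpr <| by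
    rw [coeff_zero_eq_eval_zero, hP 0 (Finset.mem_insert_self _ _), if_neg hμ.symm]
  have hφ : ∀ φ : characterSpace ℂ B, φ (aeval β P) = if φ β = μ then 1 else 0 := fun φ => by
    rw [← aeval_algHom_apply φ β P, coe_aeval_eq_eval]
    exact hP _ (Finset.mem_insert_of_mem (hβ.mem_toFinset.mpr (AlgHom.apply_mem_spectrum φ β)))
  obtain ⟨q, hq, hdvd, hq'⟩ := exists_isIdempotentElem_dvd_character_eq (e := aeval β P)
    fun φ => by rw [hφ]; split_ifs <;> simp [IsIdempotentElem]
  refine ⟨q, hq, dvd_trans ⟨aeval β Q, by rw [hQ, map_mul, aeval_X]⟩ hdvd, fun φ => ?_⟩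
  rw [hq', hφ]

end CommBanach

section SpectralIdempotents

open WeakDual

variable {A : Type*} [NormedRing A] [NormedAlgebra ℂ A] [CompleteSpace A]

noncomputable instance (b : A) : NormedCommRing (Algebra.elemental ℂ b) :=
  { SubringClass.toNormedRing (Algebra.elemental ℂ b) with mul_comm := mul_comm }

lemma spectrum_elemental_self {b : A} (hb : (spectrum ℂ b).Countable) :
    spectrum ℂ (⟨b, Algebra.elemental.self_mem ℂ b⟩ : Algebra.elemental ℂ b) = spectrum ℂ b :=
  Subalgebra.spectrum_eq_of_isPreconnected_compl _ _
    (hb.isConnected_compl_of_one_lt_rank (by simp)).isPreconnected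

theorem exists_orthogonalIdempotents_dvd (b : A) (hb : (spectrum ℂ b).Finite) :
    ∃ f : (spectrum ℂ b \ {0} : Set ℂ) → A, OrthogonalIdempotents f ∧ ∀ i, f i ≠ 0 ∧ b ∣ f i := by
  set β : Algebra.elemental ℂ b := ⟨b, Algebra.elemental.self_mem ℂ b⟩
  have hσ : spectrum ℂ β = spectrum ℂ b := spectrum_elemental_self hb.countable
  choose q hq hdvd hφ using fun i : (spectrum ℂ b \ {0} : Set ℂ) =>
    exists_isIdempotentElem_dvd_character_eq_ite β (hσ ▸ hb) i.2.2
  refine ⟨fun i => q i, ⟨fun i => (hq i).map (Algebra.elemental ℂ b).val, fun i j hij => ?_⟩,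
    fun i => ⟨fun h0 => ?_, map_dvd (Algebra.elemental ℂ b).val (hdvd i)⟩⟩
  · have h : q i * q j = 0 := ((hq i).mul (hq j)).eq_zero_of_forall_character fun φ => by
      rw [map_mul, hφ, hφ]
      split_ifs with h1 h2 <;> simp_all [Subtype.ext_iff]
    exact congrArg Subtype.val h
  · obtain ⟨φ, hφi⟩ := CharacterSpace.mem_spectrum_iff_exists.mp
      (hσ.symm ▸ i.2.1 : (i : ℂ) ∈ spectrum ℂ β)
    have h1 := hφ i φ
    rw [if_pos hφi, show q i = 0 from Subtype.ext h0, map_zero] at h1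
    exact zero_ne_one h1

end SpectralIdempotents

section SpectralRank

variable {A : Type*} [NormedRing A] [NormedAlgebra ℂ A]

lemma encard_spectrum_mul_sdiff_zero_le_sRank (z a : A) :
    (spectrum ℂ (z * a) \ {0}).encard ≤ sRank a :=
  le_iSup (fun x : A => (spectrum ℂ (x * a) \ {0}).encard) z

lemma sRank_mul_left_le (u a : A) : sRank (u * a) ≤ sRank a :=
  iSup_le fun z => mul_assoc z u a ▸ encard_spectrum_mul_sdiff_zero_le_sRank (z * u) a

lemma sRank_mul_right_le (a u : A) : sRank (a * u) ≤ sRank a :=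
  iSup_le fun z => by
    rw [← mul_assoc, spectrum.nonzero_mul_comm, ← mul_assoc]
    exact encard_spectrum_mul_sdiff_zero_le_sRank (u * z) a

lemma sRank_le_of_dvd {a c : A} (h : a ∣ c) : sRank c ≤ sRank a := by
  obtain ⟨u, rfl⟩ := h
  exact sRank_mul_right_le a u

lemma finite_spectrum_of_sRank_ne_top {a : A} (ha : sRank a ≠ ⊤) : (spectrum ℂ a).Finite := by
  refine Set.Finite.of_sdiff (t := {0}) ?_ (Set.finite_singleton 0)
  refine Set.encard_ne_top_iff.mp (ne_top_of_le_ne_top ha ?_)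
  simpa using encard_spectrum_mul_sdiff_zero_le_sRank 1 a

variable [CompleteSpace A]

lemma sRank_add_one_le_sRank_add {p q : A} (hp : IsIdempotentElem p) (hq : IsIdempotentElem q)
    (hpq : p * q = 0) (hqp : q * p = 0) (hq0 : q ≠ 0) : sRank p + 1 ≤ sRank (p + q) := by
  rw [sRank, ENat.iSup_add]
  refine iSup_le fun w => ?_
  set t : ℂ := ((‖w * p‖ * ‖(1 : A)‖ + 1 : ℝ) : ℂ)
  have ht : t ∉ spectrum ℂ (w * p) := fun h => by
    have := spectrum.subset_closedBall_norm_mul (w * p) h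
    rw [Metric.mem_closedBall, dist_zero_right, Complex.norm_real,
      Real.norm_of_nonneg (by positivity)] at this
    linarith
  have ht0 : t ≠ 0 := by simp only [t, ne_eq, Complex.ofReal_eq_zero]; positivity
  -- `Z (p + q) = Z`, and the nonzero spectrum of `Z` is that of `w p` plus the new point `t`
  set Z : A := p * w * p + t • q
  have hZ : Z * (p + q) = Z := by
    simp only [Z, add_mul, mul_add, mul_assoc, hp.eq, hpq, smul_mul_assoc, hqp, hq.eq]
    simp
  have hpwp : spectrum ℂ (p * w * p) \ {0} = spectrum ℂ (w * p) \ {0} := by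
    rw [mul_assoc, spectrum.nonzero_mul_comm, mul_assoc, hp.eq]
  have horth₁ : p * w * p * (t • q) = 0 := by
    rw [mul_smul_comm, mul_assoc, hpq, mul_zero, smul_zero]
  have horth₂ : t • q * (p * w * p) = 0 := by
    rw [smul_mul_assoc, ← mul_assoc, ← mul_assoc, hqp, zero_mul, zero_mul, smul_zero]
  have hsub : insert t (spectrum ℂ (w * p) \ {0}) ⊆ spectrum ℂ Z \ {0} := by
    refine Set.insert_subset ⟨?_, ht0⟩ fun μ hμ => ⟨?_, hμ.2⟩
    · rw [show Z = t • q + p * w * p from add_comm _ _]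
      exact spectrum_sdiff_zero_subset_add horth₂ horth₁ ⟨hq.mem_spectrum_smul hq0 t, ht0⟩
    · exact spectrum_sdiff_zero_subset_add horth₁ horth₂ (hpwp ▸ hμ)
  calc (spectrum ℂ (w * p) \ {0}).encard + 1
      = (insert t (spectrum ℂ (w * p) \ {0})).encard :=
        (Set.encard_insert_of_notMem (by simp [ht])).symm
    _ ≤ (spectrum ℂ (Z * (p + q)) \ {0}).encard := by rw [hZ]; exact Set.encard_le_encard hsub
    _ ≤ sRank (p + q) := encard_spectrum_mul_sdiff_zero_le_sRank Z (p + q)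

lemma exists_isIdempotentElem_dvd_sRank_add_one_le {p : A} (hp : sRank p ≠ ⊤)
    (h1 : 1 < sRank p) : ∃ f : A, IsIdempotentElem f ∧ f ≠ 0 ∧ p ∣ f ∧ sRank f + 1 ≤ sRank p := by
  obtain ⟨z, hz⟩ := lt_iSup_iff.mp h1
  rw [spectrum.nonzero_mul_comm] at hz
  obtain ⟨μ₁, μ₂, hμ₁, hμ₂, hne⟩ := Set.one_lt_encard_iff.mp hz
  obtain ⟨f, hf, hf0⟩ := exists_orthogonalIdempotents_dvd (p * z)
    (finite_spectrum_of_sRank_ne_top (ne_top_of_le_ne_top hp (sRank_mul_right_le p z)))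
  have hne' : (⟨μ₁, hμ₁⟩ : (spectrum ℂ (p * z) \ {0} : Set ℂ)) ≠ ⟨μ₂, hμ₂⟩ := by simpa using hne
  refine ⟨f ⟨μ₁, hμ₁⟩, hf.idem _, (hf0 _).1, (dvd_mul_right p z).trans (hf0 _).2, ?_⟩
  calc sRank (f ⟨μ₁, hμ₁⟩) + 1 ≤ sRank (f ⟨μ₁, hμ₁⟩ + f ⟨μ₂, hμ₂⟩) :=
        sRank_add_one_le_sRank_add (hf.idem _) (hf.idem _) (hf.ortho hne') (hf.ortho hne'.symm)
          (hf0 _).1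
    _ ≤ sRank p := sRank_le_of_dvd ((dvd_mul_right p z).trans (dvd_add (hf0 _).2 (hf0 _).2))

theorem sRank_le_one_of_forall_mul_eq_zero {p : A} (hp : sRank p ≠ ⊤)
    (hS : ∀ c : A, sRank c ≤ 1 → p * c = 0) : sRank p ≤ 1 := by
  obtain ⟨n, hn⟩ : ∃ n : ℕ, sRank p ≤ n := ⟨_, (ENat.natCast_toNat hp).ge⟩
  induction n generalizing p with
  | zero => exact hn.trans (by norm_num)
  | succ n ih =>
    by_contra h1
    obtain ⟨f, hf, hf0, ⟨h, rfl⟩, hrank⟩ :=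
      exists_isIdempotentElem_dvd_sRank_add_one_le hp (not_le.mp h1)
    have hfS : ∀ c : A, sRank c ≤ 1 → p * h * c = 0 := fun c hc => by
      rw [mul_assoc]
      exact hS _ ((sRank_mul_left_le h c).trans hc)
    have hfn : sRank (p * h) ≤ n := by
      have := hrank.trans hn
      rw [Nat.cast_succ] at this
      exact (WithTop.add_le_add_iff_right ENat.one_ne_top).mp this
    have := ih (ne_top_of_le_ne_top (ENat.natCast_ne_top n) hfn) hfS hfn
    exact hf0 (hf.eq.symm.trans (hfS _ this))

end SpectralRank

section Socle

variable {A : Type*} [NormedRing A] [NormedAlgebra ℂ A]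

lemma spectrum_subset_zero_of_trOne_eq_zero {a : A} (ha : (spectrum ℂ a \ {0}).encard ≤ 1)
    (htr : trOne a = 0) : spectrum ℂ a ⊆ {0} := by
  intro μ hμ
  by_contra hμ0
  rcases Set.encard_le_one_iff_eq.mp ha with h | h
  · exact (h ▸ ⟨hμ, hμ0⟩ : μ ∈ (∅ : Set ℂ))
  · have h0 := h.choose_spec
    rw [show h.choose = 0 by simpa [trOne, h] using htr] at h0
    exact (h0.symm ▸ Set.mem_singleton 0 : (0 : ℂ) ∈ spectrum ℂ a \ {0}).2 rfl

lemma mul_eq_zero_of_forall_trOne_mul_eq_zero (hA : Ideal.jacobson (⊥ : Ideal A) = ⊥) {x : A}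
    (h : ∀ a : A, sRank a ≤ 1 → trOne (x * a) = 0) {c : A} (hc : sRank c ≤ 1) : x * c = 0 :=
  eq_zero_of_forall_spectrum_mul_subset_zero (𝕜 := ℂ) hA fun y => by
    have hcy : sRank (c * y) ≤ 1 := (sRank_mul_right_le c y).trans hc
    rw [mul_assoc]
    exact spectrum_subset_zero_of_trOne_eq_zero
      ((encard_spectrum_mul_sdiff_zero_le_sRank x (c * y)).trans hcy) (h _ hcy)

variable [CompleteSpace A]

theorem eq_zero_of_mem_socle_of_forall_mul_eq_zero (hA : Ideal.jacobson (⊥ : Ideal A) = ⊥)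
    {u : A} (hu : u ∈ socle A) (hS : ∀ c : A, sRank c ≤ 1 → u * c = 0) : u = 0 :=
  eq_zero_of_forall_spectrum_mul_subset_zero (𝕜 := ℂ) hA fun y => by
    have hyS : ∀ c : A, sRank c ≤ 1 → u * y * c = 0 := fun c hc => by
      rw [mul_assoc]
      exact hS _ ((sRank_mul_left_le y c).trans hc)
    have h1 := sRank_le_one_of_forall_mul_eq_zero
      (ne_top_of_le_ne_top hu (sRank_mul_right_le u y)) hyS
    exact IsNilpotent.spectrum_subset_zero ⟨2, by rw [pow_two, hyS _ h1]⟩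

end Socle

theorem annihilates_socle_of_trace_zero {A : Type*} [NormedRing A]
    [NormedAlgebra ℂ A] [CompleteSpace A]
    (hA : Ideal.jacobson (⊥ : Ideal A) = ⊥) (x : A)
    (h : ∀ a : A, sRank a ≤ 1 → trOne (x * a) = 0) :
    (∀ a ∈ socle A, x * a = 0) ∧ (x ∈ socle A → x = 0) := by
  have hS : ∀ c : A, sRank c ≤ 1 → x * c = 0 := fun c hc =>
    mul_eq_zero_of_forall_trOne_mul_eq_zero hA h hc
  refine ⟨fun a ha => ?_, fun hx => eq_zero_of_mem_socle_of_forall_mul_eq_zero hA hx hS⟩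
  refine eq_zero_of_mem_socle_of_forall_mul_eq_zero hA
    (ne_top_of_le_ne_top ha (sRank_mul_left_le x a)) fun c hc => ?_
  rw [mul_assoc]
  exact hS _ ((sRank_mul_left_le a c).trans hc)
end
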